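/- arXiv:1104.3648 — 3 statements merged into one kernel-verified Lean document; each statement's English description precedes it below -/
import Mathlib

section
/- Let F = x_0^{d_0} · ⋯ · x_n^{d_n} with d_0 ≤ d_1 ≤ ⋯ ≤ d_n. The ideal (y_0^{d_0+1}, …, y_{n-1}^{d_{n-1}+1}) ⊂ S defines a zero-dimensional subscheme Γ ⊂ P^n of degree (d_0+1)⋯(d_{n-1}+1) that is apolar to F, i.e. its homogeneous ideal is contained in F^⊥. -/
open MvPolynomial

/-- The differential operator on `MvPolynomial (Fin n) K` given by the monomial `y^s`:
the composition of the partial derivatives `∂_i` iterated `s i` times. -/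
noncomputable def monOp {n : ℕ} (K : Type*) [CommSemiring K] (s : Fin n →₀ ℕ) :
    MvPolynomial (Fin n) K →ₗ[K] MvPolynomial (Fin n) K :=
  (List.ofFn fun i : Fin n =>
    ((pderiv i).toLinearMap : MvPolynomial (Fin n) K →ₗ[K] MvPolynomial (Fin n) K) ^ (s i)).prod

/-- The apolarity action `g ∘ F` of `S = K[y_0,…,y_n]` on `T = K[x_0,…,x_n]`,
where `y_i` acts as `∂/∂x_i`. -/
noncomputable def apolarAct {n : ℕ} {K : Type*} [CommSemiring K]
    (g F : MvPolynomial (Fin n) K) : MvPolynomial (Fin n) K :=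
  (AddMonoidAlgebra.coeff g).sum fun s c => c • (monOp K s F)

/-- The annihilator `F^⊥ = {g : g ∘ F = 0}` of `F` under the apolarity action. -/
def perp {n : ℕ} {K : Type*} [CommSemiring K] (F : MvPolynomial (Fin n) K) :
    Set (MvPolynomial (Fin n) K) :=
  {g | apolarAct g F = 0}

/-- A homogeneous ideal: all homogeneous components of members belong to the ideal. -/
def HomogIdeal {n : ℕ} {K : Type*} [CommSemiring K]
    (I : Ideal (MvPolynomial (Fin n) K)) : Prop :=
  ∀ g ∈ I, ∀ t, homogeneousComponent t g ∈ I

/-- Saturation with respect to the irrelevant maximal ideal. -/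
def SatIdeal {n : ℕ} {K : Type*} [CommSemiring K]
    (I : Ideal (MvPolynomial (Fin n) K)) : Prop :=
  ∀ g, (∀ i, X i * g ∈ I) → g ∈ I

/-- An ideal generated by homogeneous elements of degrees `≤ d`. -/
def GenInDegLE {n : ℕ} {K : Type*} [CommSemiring K]
    (I : Ideal (MvPolynomial (Fin n) K)) (d : ℕ) : Prop :=
  ∃ G : Set (MvPolynomial (Fin n) K), I = Ideal.span G ∧
    ∀ g ∈ G, ∃ k ≤ d, g ∈ homogeneousSubmodule (Fin n) K k

/-- The Hilbert function of `S/I` in degree `t`: the `K`-dimension of the degree-`t`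
part of `S` modulo the degree-`t` part of `I`. -/
noncomputable def hilb {n : ℕ} (K : Type*) [Field K]
    (I : Ideal (MvPolynomial (Fin n) K)) (t : ℕ) : ℕ :=
  Module.finrank K (↥(homogeneousSubmodule (Fin n) K t) ⧸
    (Submodule.comap (homogeneousSubmodule (Fin n) K t).subtype (I.restrictScalars K)))

/-- `Γ ⊆ Pⁿ⁻¹` defined by the saturated homogeneous ideal `I` is finite of degree `D`:
the Hilbert function is eventually the constant `D`. -/
def FiniteSchemeDeg {n : ℕ} (K : Type*) [Field K]
    (I : Ideal (MvPolynomial (Fin n) K)) (D : ℕ) : Prop :=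
  ∃ N, ∀ t ≥ N, hilb K I t = D

/-- The cactus rank: minimal degree of a finite subscheme apolar to `F`. -/
noncomputable def cactusRank {n : ℕ} {K : Type*} [Field K]
    (F : MvPolynomial (Fin n) K) : ℕ :=
  sInf {D | ∃ I : Ideal (MvPolynomial (Fin n) K), HomogIdeal I ∧ SatIdeal I ∧
    (↑I : Set (MvPolynomial (Fin n) K)) ⊆ perp F ∧ FiniteSchemeDeg K I D}

/-- The (homogeneous) vanishing ideal of the point set `{[p 0],…,[p (r-1)]} ⊆ Pⁿ⁻¹`:
polynomials vanishing on the affine cone over the points. -/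
def pointsIdeal {n r : ℕ} {K : Type*} [CommSemiring K] (p : Fin r → Fin n → K) :
    Set (MvPolynomial (Fin n) K) :=
  {g | ∀ j, ∀ c : K, eval (c • p j) g = 0}

/-- The rank of `F`: the minimal cardinality of a set of (distinct) points of `Pⁿ⁻¹`
whose vanishing ideal is contained in `F^⊥`. -/
noncomputable def symRank {n : ℕ} {K : Type*} [Field K]
    (F : MvPolynomial (Fin n) K) : ℕ :=
  sInf {r | ∃ p : Fin r → Fin n → K, (∀ j, p j ≠ 0) ∧
    (∀ j k, j ≠ k → ∀ c : K, p j ≠ c • p k) ∧ pointsIdeal p ⊆ perp F}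

private lemma pd_pow_monomial {N : ℕ} {K : Type*} [CommSemiring K] (i : Fin N) (k : ℕ)
    (a : Fin N →₀ ℕ) (c : K) :
    (((pderiv i).toLinearMap : MvPolynomial (Fin N) K →ₗ[K] MvPolynomial (Fin N) K) ^ k)
      (monomial a c)
      = monomial (a - Finsupp.single i k) (c * ((a i).descFactorial k : K)) := by
  induction k generalizing a c with
  | zero => simp
  | succ k ih =>
    rw [pow_succ, Module.End.mul_apply, show ((pderiv i).toLinearMap : MvPolynomial (Fin N) K →ₗ[K] MvPolynomial (Fin N) K) ((monomial a) c) = pderiv i (monomial a c) from rfl, pderiv_monomial, ih]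
    have h1 : a - Finsupp.single i 1 - Finsupp.single i k = a - Finsupp.single i (k + 1) := by
      rw [tsub_tsub, ← Finsupp.single_add, add_comm]
    have h2 : (a - Finsupp.single i (1:ℕ)) i = a i - 1 := by
      rw [Finsupp.tsub_apply, Finsupp.single_eq_same]
    have h3 : (a i) * (a i - 1).descFactorial k = (a i).descFactorial (k + 1) := by
      cases h : a i with
      | zero => simp
      | succ m => rw [Nat.succ_descFactorial_succ]; simp
    rw [h1, h2, ← h3]
    push_cast
    ring_nf

private lemma prod_pd_monomial {N : ℕ} {K : Type*} [CommSemiring K] (s : Fin N →₀ ℕ)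
    (l : List (Fin N)) (hl : l.Nodup) (a : Fin N →₀ ℕ) (c : K) :
    ((l.map fun i => ((pderiv i).toLinearMap :
        MvPolynomial (Fin N) K →ₗ[K] MvPolynomial (Fin N) K) ^ (s i)).prod) (monomial a c)
      = monomial (a - (l.map fun i => Finsupp.single i (s i)).sum)
          (c * (((l.map fun i => (a i).descFactorial (s i)).prod : ℕ) : K)) := by
  induction l with
  | nil => simp
  | cons i l ih =>
    have hnd := List.nodup_cons.mp hl
    have hS : ((l.map fun j => Finsupp.single j (s j)).sum) i = 0 := by
      have := map_list_sum (Finsupp.applyAddHom (M := ℕ) i)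
        (l.map fun j => Finsupp.single j (s j))
      rw [Finsupp.applyAddHom_apply] at this
      rw [this, List.map_map]
      apply List.sum_eq_zero
      intro x hx
      obtain ⟨j, hj, rfl⟩ := List.mem_map.mp hx
      exact Finsupp.single_eq_of_ne' (fun h => hnd.1 (h ▸ hj))
    rw [List.map_cons, List.prod_cons, Module.End.mul_apply, ih hnd.2,
      pd_pow_monomial, List.map_cons, List.sum_cons, List.map_cons, List.prod_cons]
    congr 1
    · rw [tsub_tsub, add_comm]
    · rw [Finsupp.tsub_apply, hS, Nat.sub_zero]
      push_cast
      ring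

private lemma univ_sum_single_eq {N : ℕ} (s : Fin N →₀ ℕ) :
    ∑ i, Finsupp.single i (s i) = s := by
  have h1 : ∑ i ∈ s.support, Finsupp.single i (s i) = s := Finsupp.sum_single s
  conv_rhs => rw [← h1]
  exact (Finset.sum_subset (Finset.subset_univ _) (fun x _ hx => by
    rw [Finsupp.notMem_support_iff.mp hx, Finsupp.single_zero])).symm

private lemma monOp_monomial {N : ℕ} {K : Type*} [CommSemiring K] (s a : Fin N →₀ ℕ) (c : K) :
    monOp K s (monomial a c)
      = monomial (a - s) (c * ((∏ i, (a i).descFactorial (s i) : ℕ) : K)) := by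
  rw [monOp, List.ofFn_eq_map, prod_pd_monomial s _ (List.nodup_finRange N)]
  rw [← List.ofFn_eq_map, ← List.ofFn_eq_map, List.sum_ofFn, List.prod_ofFn,
    univ_sum_single_eq]

private lemma monOp_add_apply {N : ℕ} {K : Type*} [CommSemiring K] (s t : Fin N →₀ ℕ)
    (F : MvPolynomial (Fin N) K) :
    monOp K (s + t) F = monOp K s (monOp K t F) := by
  induction F using MvPolynomial.induction_on' with
  | add p q hp hq => rw [map_add, map_add, map_add, hp, hq]
  | monomial a c =>
    rw [monOp_monomial, monOp_monomial, monOp_monomial]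
    have hexp : a - (s + t) = a - t - s := by rw [tsub_tsub, add_comm]
    have hcoef : ∀ i, ((a - t) i).descFactorial (s i) * (a i).descFactorial (t i)
        = (a i).descFactorial (s i + t i) := by
      intro i
      rw [Finsupp.tsub_apply]
      have := Nat.descFactorial_mul_descFactorial
        (k := t i) (m := s i + t i) (n := a i) (Nat.le_add_left _ _)
      simpa using this
    rw [hexp]
    congr 1
    have hpr : (∏ i, (a i).descFactorial ((s + t) i))
        = (∏ i, (a i).descFactorial (t i)) * ∏ i, ((a - t) i).descFactorial (s i) := by
      rw [← Finset.prod_mul_distrib]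
      exact Finset.prod_congr rfl fun i _ => by
        rw [Finsupp.add_apply, ← hcoef i, mul_comm]
    rw [hpr]
    push_cast
    ring

private lemma apolarAct_monomial {N : ℕ} {K : Type*} [CommSemiring K] (s : Fin N →₀ ℕ)
    (c : K) (F : MvPolynomial (Fin N) K) :
    apolarAct (monomial s c) F = c • monOp K s F := by
  rw [apolarAct]
  exact sum_monomial_eq (b := fun s c => c • monOp K s F) (by simp)

private lemma apolarAct_add_left {N : ℕ} {K : Type*} [CommSemiring K]
    (g h F : MvPolynomial (Fin N) K) :
    apolarAct (g + h) F = apolarAct g F + apolarAct h F := by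
  rw [apolarAct, apolarAct, apolarAct]
  exact Finsupp.sum_add_index' (f := AddMonoidAlgebra.coeff g) (g := AddMonoidAlgebra.coeff h) (fun s => zero_smul _ _) (fun s c c' => add_smul _ _ _)

private lemma apolarAct_zero_left {N : ℕ} {K : Type*} [CommSemiring K]
    (F : MvPolynomial (Fin N) K) : apolarAct (0 : MvPolynomial (Fin N) K) F = 0 := by
  rw [apolarAct]; exact Finsupp.sum_zero_index (h := fun s c => c • monOp K s F)

private lemma apolarAct_zero_right {N : ℕ} {K : Type*} [CommSemiring K]
    (g : MvPolynomial (Fin N) K) : apolarAct g (0 : MvPolynomial (Fin N) K) = 0 := by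
  rw [apolarAct]
  exact Finset.sum_eq_zero fun s _ => by simp only [map_zero, smul_zero]

private lemma apolarAct_add_right {N : ℕ} {K : Type*} [CommSemiring K]
    (g F G : MvPolynomial (Fin N) K) :
    apolarAct g (F + G) = apolarAct g F + apolarAct g G := by
  rw [apolarAct, apolarAct, apolarAct, ← Finsupp.sum_add]
  exact Finsupp.sum_congr fun s _ => by rw [map_add, smul_add]

private lemma apolarAct_mul {N : ℕ} {K : Type*} [CommSemiring K]
    (p g F : MvPolynomial (Fin N) K) :
    apolarAct (p * g) F = apolarAct p (apolarAct g F) := by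
  induction p using MvPolynomial.induction_on' with
  | add p q hp hq => rw [add_mul, apolarAct_add_left, hp, hq, apolarAct_add_left]
  | monomial s c =>
    induction g using MvPolynomial.induction_on' with
    | add g h hg hh =>
      rw [mul_add, apolarAct_add_left, hg, hh, apolarAct_add_left g h F,
        apolarAct_monomial, apolarAct_monomial, apolarAct_monomial, ← smul_add, ← map_add]
    | monomial t c' =>
      rw [monomial_mul, apolarAct_monomial, apolarAct_monomial, apolarAct_monomial,
        monOp_add_apply, map_smul, smul_smul]

private lemma prod_X_pow_eq_monomial' {N : ℕ} {K : Type*} [CommSemiring K] (d : Fin N → ℕ) :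
    (∏ i, (X i : MvPolynomial (Fin N) K) ^ d i)
      = monomial (Finsupp.equivFunOnFinite.symm d) 1 := by
  set D : Fin N →₀ ℕ := Finsupp.equivFunOnFinite.symm d with hD
  have hDa : ∀ i, D i = d i := fun i => rfl
  rw [← MvPolynomial.prod_X_pow_eq_monomial (s := D)]
  refine Eq.symm ?_
  calc ∏ i ∈ D.support, (X i : MvPolynomial (Fin N) K) ^ D i
      = ∏ i : Fin N, (X i : MvPolynomial (Fin N) K) ^ D i :=
        Finset.prod_subset (Finset.subset_univ _) (fun i _ hi => by
          rw [Finsupp.notMem_support_iff.mp hi, pow_zero])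
    _ = ∏ i, (X i : MvPolynomial (Fin N) K) ^ d i := rfl

private lemma apolarAct_gen_eq_zero {N : ℕ} {K : Type*} [CommSemiring K]
    (d : Fin N → ℕ) (j : Fin N) :
    apolarAct ((X j : MvPolynomial (Fin N) K) ^ (d j + 1))
      (∏ i, (X i : MvPolynomial (Fin N) K) ^ d i) = 0 := by
  rw [prod_X_pow_eq_monomial', X_pow_eq_monomial, apolarAct_monomial, monOp_monomial]
  have : (∏ i, ((Finsupp.equivFunOnFinite.symm d) i).descFactorial
      ((Finsupp.single j (d j + 1)) i)) = 0 := by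
    apply Finset.prod_eq_zero (Finset.mem_univ j)
    rw [Finsupp.single_eq_same]
    exact Nat.descFactorial_eq_zero_iff_lt.mpr (Nat.lt_succ_self _)
  rw [this]
  simp

private lemma degree_eq_sum_univ {N : ℕ} (m : Fin N →₀ ℕ) :
    Finsupp.degree m = ∑ j, m j :=
  Finset.sum_subset (Finset.subset_univ _) (fun x _ hx => Finsupp.notMem_support_iff.mp hx)

private lemma hilb_eval {K : Type*} [Field K] {n : ℕ} (d : Fin (n + 1) → ℕ) (t : ℕ)
    (ht : ∑ i : Fin n, d i.castSucc ≤ t) :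
    hilb K (Ideal.span (Set.range fun i : Fin n =>
        (X i.castSucc : MvPolynomial (Fin (n + 1)) K) ^ (d i.castSucc + 1))) t
      = ∏ i : Fin n, (d i.castSucc + 1) := by
  classical
  set I : Ideal (MvPolynomial (Fin (n + 1)) K) := Ideal.span (Set.range fun i : Fin n =>
    (X i.castSucc : MvPolynomial (Fin (n + 1)) K) ^ (d i.castSucc + 1)) with hI
  have hmem : ∀ p : MvPolynomial (Fin (n + 1)) K,
      p ∈ I ↔ ∀ m ∈ p.support, ∃ i : Fin n, d i.castSucc + 1 ≤ m i.castSucc := by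
    intro p
    have himg : (Set.range fun i : Fin n =>
        (X i.castSucc : MvPolynomial (Fin (n + 1)) K) ^ (d i.castSucc + 1))
        = (fun s => monomial s (1 : K)) ''
          (Set.range fun i : Fin n => Finsupp.single i.castSucc (d i.castSucc + 1)) := by
      rw [← Set.range_comp]
      exact congrArg Set.range (funext fun i => X_pow_eq_monomial)
    rw [hI, himg, mem_ideal_span_monomial_image]
    refine forall₂_congr fun m hm => ?_
    constructor
    · rintro ⟨si, ⟨i, rfl⟩, hle⟩
      exact ⟨i, Finsupp.single_le_iff.mp hle⟩
    · rintro ⟨i, hi⟩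
      exact ⟨_, ⟨i, rfl⟩, Finsupp.single_le_iff.mpr hi⟩
  set V := homogeneousSubmodule (Fin (n + 1)) K t with hV
  set W := Submodule.comap V.subtype (I.restrictScalars K) with hW
  set e : ((i : Fin n) → Fin (d i.castSucc + 1)) → (Fin (n + 1) →₀ ℕ) := fun b =>
    Finsupp.equivFunOnFinite.symm
      (Fin.snoc (fun i => (b i : ℕ)) (t - ∑ i, (b i : ℕ))) with he
  have he_cast : ∀ b i, e b i.castSucc = b i := by
    intro b i
    rw [he]
    simp only [Finsupp.coe_equivFunOnFinite_symm]
    rw [Fin.snoc_castSucc]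
  have he_last : ∀ b, e b (Fin.last n) = t - ∑ i, (b i : ℕ) := by
    intro b
    rw [he]
    simp only [Finsupp.coe_equivFunOnFinite_symm]
    rw [Fin.snoc_last]
  have hsum_le : ∀ b : (i : Fin n) → Fin (d i.castSucc + 1), ∑ i, (b i : ℕ) ≤ t :=
    fun b => le_trans (Finset.sum_le_sum fun i _ => Nat.lt_succ_iff.mp (b i).isLt) ht
  have hdeg_e : ∀ b, ∑ j, e b j = t := by
    intro b
    rw [Fin.sum_univ_castSucc, he_last b,
      Finset.sum_congr rfl fun i _ => he_cast b i]
    have := hsum_le b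
    omega
  have he_inj : Function.Injective e := by
    intro b b' h
    funext i
    have := congrArg (fun m : Fin (n + 1) →₀ ℕ => m i.castSucc) h
    simp only [he_cast] at this
    exact Fin.ext this
  set φ : V →ₗ[K] (((i : Fin n) → Fin (d i.castSucc + 1)) → K) :=
    LinearMap.pi (fun b => (lcoeff K (e b)).comp V.subtype) with hφ
  have hφ_apply : ∀ (x : V) b, φ x b = coeff (e b) (x : MvPolynomial (Fin (n + 1)) K) :=
    fun x b => rfl
  have hsurj : Function.Surjective φ := by
    intro f
    have hmemV : ∀ b, (monomial (e b) (1 : K)) ∈ V := fun b =>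
      (mem_homogeneousSubmodule _ _).mpr
        (isHomogeneous_monomial _ ((degree_eq_sum_univ (e b)).trans (hdeg_e b)))
    refine ⟨⟨∑ b, f b • monomial (e b) (1 : K),
      Submodule.sum_mem _ fun b _ => Submodule.smul_mem _ _ (hmemV b)⟩, ?_⟩
    funext b'
    rw [hφ_apply]
    simp only [MvPolynomial.coeff_sum, MvPolynomial.coeff_smul, coeff_monomial,
      smul_eq_mul, mul_ite, mul_one, mul_zero, he_inj.eq_iff]
    rw [Finset.sum_ite_eq' Finset.univ b' f]
    simp
  have hhomog : ∀ p : MvPolynomial (Fin (n + 1)) K, p ∈ V →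
      ∀ m ∈ p.support, ∑ j, m j = t := by
    intro p hp m hm
    have h1 : Finsupp.degree m = t := by
      rw [Finsupp.degree_eq_weight_one]
      exact ((mem_homogeneousSubmodule _ _).mp hp) (mem_support_iff.mp hm)
    rw [← degree_eq_sum_univ, h1]
  have hker : LinearMap.ker φ = W := by
    ext x
    obtain ⟨p, hp⟩ := x
    simp only [LinearMap.mem_ker, hW, Submodule.mem_comap, Submodule.subtype_apply,
      Submodule.restrictScalars_mem]
    constructor
    · intro h0
      show p ∈ I
      rw [hmem]
      intro m hm
      by_contra hcon
      push_neg at hcon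
      set b : (i : Fin n) → Fin (d i.castSucc + 1) := fun i =>
        ⟨m i.castSucc, hcon i⟩ with hb
      have hdm : ∑ j, m j = t := hhomog p hp m hm
      have hem : e b = m := by
        ext j
        refine Fin.lastCases ?_ ?_ j
        · rw [he_last]
          have h2 := Fin.sum_univ_castSucc (f := fun j => m j)
          have h3 : ∑ i, (b i : ℕ) = ∑ i : Fin n, m i.castSucc :=
            Finset.sum_congr rfl fun i _ => rfl
          rw [h3]
          omega
        · intro i
          rw [he_cast]
      have h4 : coeff (e b) p = 0 := congrFun h0 b
      rw [hem] at h4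
      exact (mem_support_iff.mp hm) h4
    · intro hpI
      funext b
      rw [hφ_apply]
      by_contra hc
      obtain ⟨i, hi⟩ := (hmem p).mp hpI (e b) (mem_support_iff.mpr hc)
      rw [he_cast] at hi
      exact absurd hi (by have := (b i).isLt; omega)
  have hq : hilb K I t = Module.finrank K (V ⧸ W) := rfl
  rw [hq, LinearEquiv.finrank_eq
    ((Submodule.quotEquivOfEq _ _ hker.symm).trans (φ.quotKerEquivOfSurjective hsurj))]
  simp [Module.finrank_pi]

/-- For `F = x₀^{d₀}⋯xₙ^{dₙ}` with `d₀ ≤ ⋯ ≤ dₙ`, the ideal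
`(y₀^{d₀+1},…,y_{n-1}^{d_{n-1}+1})` defines a finite subscheme of `Pⁿ` of degree
`(d₀+1)⋯(d_{n-1}+1)` apolar to `F`. -/
theorem monomial_apolar_scheme {K : Type*} [Field K] [IsAlgClosed K] [CharZero K]
    {n : ℕ} (d : Fin (n + 1) → ℕ) (hd : Monotone d) :
    (↑(Ideal.span (Set.range fun i : Fin n =>
        (X i.castSucc : MvPolynomial (Fin (n + 1)) K) ^ (d i.castSucc + 1)))
        : Set (MvPolynomial (Fin (n + 1)) K)) ⊆
      perp (∏ i, (X i : MvPolynomial (Fin (n + 1)) K) ^ d i) ∧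
    FiniteSchemeDeg K
      (Ideal.span (Set.range fun i : Fin n =>
        (X i.castSucc : MvPolynomial (Fin (n + 1)) K) ^ (d i.castSucc + 1)))
      (∏ i : Fin n, (d i.castSucc + 1)) := by

  constructor
  · intro g hg
    refine Submodule.span_induction
      (p := fun x _ => x ∈ perp (∏ i, (X i : MvPolynomial (Fin (n + 1)) K) ^ d i))
      ?_ ?_ ?_ ?_ hg
    · rintro x ⟨i, rfl⟩
      exact apolarAct_gen_eq_zero d i.castSucc
    · exact apolarAct_zero_left _
    · intro x y _ _ hx hy
      show apolarAct (x + y) _ = 0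
      rw [apolarAct_add_left, hx, hy, add_zero]
    · intro a x _ hx
      show apolarAct (a • x) _ = 0
      rw [smul_eq_mul, apolarAct_mul, hx, apolarAct_zero_right]
  · exact ⟨∑ i : Fin n, d i.castSucc, fun t ht => hilb_eval d t ht⟩
end

section
/- For F = (x_0·x_1·⋯·x_n)^d over an algebraically closed field of characteristic zero, the rank of F (minimal cardinality of a set of points in P^n whose ideal is contained in F^⊥) equals (d+1)^n. -/
open MvPolynomial

namespace CCGAux

open Finsupp Finset

variable {K : Type*} {N : ℕ}

/-! ### Basic computation of the apolarity action on monomials -/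

lemma pderiv_pow_monomial [CommSemiring K] (i : Fin N) (m : ℕ) (u : Fin N →₀ ℕ) (c : K) :
    ((((pderiv i).toLinearMap : MvPolynomial (Fin N) K →ₗ[K] MvPolynomial (Fin N) K)) ^ m)
        (monomial u c)
      = monomial (u - Finsupp.single i m) (c * ((u i).descFactorial m : K)) := by
  induction m with
  | zero => simp
  | succ m ih =>
    rw [pow_succ', Module.End.mul_apply, ih]
    have h1 : (((pderiv i).toLinearMap : MvPolynomial (Fin N) K →ₗ[K] MvPolynomial (Fin N) K))
        (monomial (u - Finsupp.single i m) (c * ((u i).descFactorial m : K)))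
        = monomial (u - Finsupp.single i m - Finsupp.single i 1)
            ((c * ((u i).descFactorial m : K)) * (((u - Finsupp.single i m) i) : K)) := by
      simp [pderiv_monomial]
    rw [h1]
    have hidx : u - Finsupp.single i m - Finsupp.single i 1 = u - Finsupp.single i (m + 1) := by
      rw [tsub_tsub, ← Finsupp.single_add]
    have happ : (u - Finsupp.single i m) i = u i - m := by
      simp [Finsupp.tsub_apply]
    have hnat : ((u i).descFactorial m) * (u i - m) = (u i).descFactorial (m + 1) := by
      rw [Nat.descFactorial_succ, Nat.mul_comm]
    rw [hidx, happ, mul_assoc, ← Nat.cast_mul, hnat]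

lemma list_sum_single_apply (s : Fin N →₀ ℕ) (i : Fin N) :
    ∀ (t : List (Fin N)), i ∉ t →
      ((t.map fun j => Finsupp.single j (s j)).sum) i = 0 := by
  intro t
  induction t with
  | nil => simp
  | cons j t ih =>
    intro hi
    simp only [List.map_cons, List.sum_cons, Finsupp.add_apply]
    simp only [List.mem_cons, not_or] at hi
    rw [Finsupp.single_apply, if_neg (fun h => hi.1 h.symm), ih hi.2, add_zero]

lemma listOp [CommSemiring K] (s : Fin N →₀ ℕ) (u : Fin N →₀ ℕ) (c : K) :
    ∀ (l : List (Fin N)), l.Nodup →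
    ((l.map fun i => (((pderiv i).toLinearMap :
        MvPolynomial (Fin N) K →ₗ[K] MvPolynomial (Fin N) K)) ^ (s i)).prod) (monomial u c)
      = monomial (u - (l.map fun i => Finsupp.single i (s i)).sum)
          (c * (l.map fun i => (((u i).descFactorial (s i) : K))).prod) := by
  intro l
  induction l with
  | nil =>
    intro _
    simp only [List.map_nil, List.prod_nil, List.sum_nil, Module.End.one_apply, tsub_zero,
      mul_one]
  | cons i t ih =>
    intro hnd
    have hi : i ∉ t := (List.nodup_cons.mp hnd).1
    have hnd' : t.Nodup := (List.nodup_cons.mp hnd).2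
    simp only [List.map_cons, List.prod_cons, List.sum_cons, Module.End.mul_apply]
    rw [ih hnd', pderiv_pow_monomial]
    have happ : (u - ((t.map fun j => Finsupp.single j (s j)).sum)) i = u i := by
      rw [Finsupp.tsub_apply, list_sum_single_apply s i t hi, Nat.sub_zero]
    rw [happ]
    have hidx : u - (List.map (fun j => Finsupp.single j (s j)) t).sum - Finsupp.single i (s i)
        = u - ((Finsupp.single i (s i)) + (List.map (fun j => Finsupp.single j (s j)) t).sum) := by
      rw [tsub_tsub, add_comm]
    have hcoef : (c * (List.map (fun j => (((u j).descFactorial (s j) : K))) t).prod)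
          * (((u i).descFactorial (s i) : K))
        = c * ((((u i).descFactorial (s i) : K))
            * (List.map (fun j => (((u j).descFactorial (s j) : K))) t).prod) := by ring
    rw [hidx, hcoef]

lemma monOp_monomial [CommSemiring K] (s u : Fin N →₀ ℕ) (c : K) :
    monOp K s (monomial u c)
      = monomial (u - s) (c * ∏ i, ((u i).descFactorial (s i) : K)) := by
  unfold monOp
  rw [List.ofFn_eq_map, listOp s u c _ (List.nodup_finRange N)]
  have h1 : ((List.finRange N).map fun i => Finsupp.single i (s i)).sum = s := by
    rw [← List.ofFn_eq_map, List.sum_ofFn, Finsupp.univ_sum_single]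
  have h2 : ((List.finRange N).map fun i => (((u i).descFactorial (s i) : K))).prod
      = ∏ i, ((u i).descFactorial (s i) : K) := by
    rw [← List.ofFn_eq_map, List.prod_ofFn]
  rw [h1, h2]

/-! ### The monomial `F` and its annihilator -/

/-- The exponent vector of `F = (x_0 ⋯ x_{N-1})^d`. -/
noncomputable def DD (N d : ℕ) : Fin N →₀ ℕ := Finsupp.equivFunOnFinite.symm (fun _ => d)

@[simp] lemma DD_apply (N d : ℕ) (i : Fin N) : DD N d i = d := by
  simp [DD]

lemma F_eq [CommSemiring K] (d : ℕ) :
    ((∏ i, (X i : MvPolynomial (Fin N) K)) ^ d) = monomial (DD N d) 1 := by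
  rw [← Finset.prod_pow]
  have : ∀ i : Fin N, (X i : MvPolynomial (Fin N) K) ^ d = monomial (Finsupp.single i d) 1 :=
    fun i => X_pow_eq_monomial
  simp_rw [this]
  have : ∀ (t : Finset (Fin N)), (∏ i ∈ t, (monomial (Finsupp.single i d) (1:K)))
      = monomial (∑ i ∈ t, Finsupp.single i d) 1 := by
    intro t
    induction t using Finset.cons_induction with
    | empty => rw [Finset.prod_empty, Finset.sum_empty, monomial_zero', C_1]
    | cons j t hj ih =>
      rw [Finset.prod_cons, ih, monomial_mul, Finset.sum_cons, one_mul]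
  rw [this Finset.univ]
  have hDD : (∑ i : Fin N, Finsupp.single i d) = DD N d := by
    ext i
    rw [Finset.sum_apply']
    simp [Finsupp.single_apply]
  rw [hDD]

lemma apolarAct_F [CommSemiring K] (d : ℕ) (g : MvPolynomial (Fin N) K) :
    apolarAct g ((∏ i, (X i : MvPolynomial (Fin N) K)) ^ d)
      = ∑ s ∈ g.support,
          monomial (DD N d - s) (coeff s g * ∏ i, ((d.descFactorial (s i) : K))) := by
  rw [F_eq]
  unfold apolarAct
  rw [Finsupp.sum]
  refine Finset.sum_congr rfl fun s hs => ?_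
  rw [monOp_monomial, smul_monomial]
  simp [coeff]

/-- `a` is a "box" exponent: all entries at most `d`. -/
def InBox (d : ℕ) (a : Fin N →₀ ℕ) : Prop := ∀ i, a i ≤ d

lemma descProd_ne_zero [Field K] [CharZero K] {d : ℕ} {a : Fin N →₀ ℕ} (ha : InBox d a) :
    (∏ i, ((d.descFactorial (a i) : K))) ≠ 0 := by
  rw [Finset.prod_ne_zero_iff]
  intro i _
  have : d.descFactorial (a i) ≠ 0 := by
    rw [Ne, Nat.descFactorial_eq_zero_iff_lt, not_lt]
    exact ha i
  exact_mod_cast this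

lemma DD_sub_inj {d : ℕ} {a b : Fin N →₀ ℕ} (ha : InBox d a) (hb : InBox d b)
    (h : DD N d - a = DD N d - b) : a = b := by
  ext i
  have := congrArg (fun f : Fin N →₀ ℕ => f i) h
  simp only [Finsupp.tsub_apply, DD_apply] at this
  have h1 := ha i
  have h2 := hb i
  omega

lemma mem_perp_iff [Field K] [CharZero K] (d : ℕ) (g : MvPolynomial (Fin N) K) :
    g ∈ perp ((∏ i, (X i : MvPolynomial (Fin N) K)) ^ d)
      ↔ ∀ a : Fin N →₀ ℕ, InBox d a → coeff a g = 0 := by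
  have hperp : g ∈ perp ((∏ i, (X i : MvPolynomial (Fin N) K)) ^ d)
      ↔ apolarAct g ((∏ i, (X i : MvPolynomial (Fin N) K)) ^ d) = 0 := Iff.rfl
  rw [hperp, apolarAct_F]
  constructor
  · intro h a ha
    by_cases hmem : a ∈ g.support
    · have := congrArg (coeff (DD N d - a)) h
      rw [coeff_sum, coeff_zero] at this
      have hsingle : ∀ s ∈ g.support, s ≠ a →
          coeff (DD N d - a) (monomial (DD N d - s)
            (coeff s g * ∏ i, ((d.descFactorial (s i) : K)))) = 0 := by
        intro s _ hsa
        by_cases hsbox : InBox d s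
        · rw [coeff_monomial, if_neg]
          intro he
          exact hsa (DD_sub_inj hsbox ha he)
        · have : (∏ i, ((d.descFactorial (s i) : K))) = 0 := by
            simp only [InBox, not_forall, not_le] at hsbox
            obtain ⟨i, hi⟩ := hsbox
            refine Finset.prod_eq_zero (Finset.mem_univ i) ?_
            have : d.descFactorial (s i) = 0 := by
              rw [Nat.descFactorial_eq_zero_iff_lt]; omega
            exact_mod_cast this
          rw [this, mul_zero]
          simp
      rw [Finset.sum_eq_single_of_mem a hmem] at this
      · rw [coeff_monomial, if_pos rfl] at this
        have hne := descProd_ne_zero (K := K) ha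
        exact (mul_eq_zero.mp this).resolve_right hne
      · exact fun s hs hsa => hsingle s hs hsa
    · exact MvPolynomial.notMem_support_iff.mp hmem
  · intro h
    refine Finset.sum_eq_zero fun s hs => ?_
    by_cases hsbox : InBox d s
    · rw [h s hsbox]
      simp
    · have : (∏ i, ((d.descFactorial (s i) : K))) = 0 := by
        simp only [InBox, not_forall, not_le] at hsbox
        obtain ⟨i, hi⟩ := hsbox
        refine Finset.prod_eq_zero (Finset.mem_univ i) ?_
        have : d.descFactorial (s i) = 0 := by
          rw [Nat.descFactorial_eq_zero_iff_lt]; omega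
        exact_mod_cast this
      rw [this, mul_zero]
      simp


/-! ### Box exponents as finsets -/

noncomputable def box (N d : ℕ) : Finset (Fin N →₀ ℕ) :=
  (Finset.univ : Finset (Fin N → Fin (d+1))).image
    (fun f => Finsupp.equivFunOnFinite.symm (fun i => (f i : ℕ)))

lemma mem_box {N d : ℕ} {a : Fin N →₀ ℕ} : a ∈ box N d ↔ InBox d a := by
  constructor
  · rintro ha
    obtain ⟨f, -, rfl⟩ := Finset.mem_image.mp ha
    intro i
    rw [Finsupp.coe_equivFunOnFinite_symm]
    exact Nat.lt_succ_iff.mp (f i).isLt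
  · intro ha
    refine Finset.mem_image.mpr ⟨fun i => ⟨a i, Nat.lt_succ_iff.mpr (ha i)⟩, Finset.mem_univ _, ?_⟩
    ext i
    rw [Finsupp.coe_equivFunOnFinite_symm]

lemma card_box (N d : ℕ) : (box N d).card = (d+1)^N := by
  rw [box, Finset.card_image_of_injective _ ?_, Finset.card_univ, Fintype.card_fun,
    Fintype.card_fin, Fintype.card_fin]
  intro f g hfg
  funext i
  have := congrArg (fun h : Fin N →₀ ℕ => h i) hfg
  simp only [Finsupp.coe_equivFunOnFinite_symm] at this
  exact Fin.ext this

noncomputable def Bt (N d t : ℕ) : Finset (Fin N →₀ ℕ) :=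
  (box N d).filter fun a => a.degree = t

lemma mem_Bt {N d t : ℕ} {a : Fin N →₀ ℕ} : a ∈ Bt N d t ↔ InBox d a ∧ a.degree = t := by
  rw [Bt, Finset.mem_filter, mem_box]

lemma degree_le_of_inBox {N d : ℕ} {a : Fin N →₀ ℕ} (ha : InBox d a) : a.degree ≤ N * d := by
  calc a.degree = ∑ i ∈ a.support, a i := rfl
    _ ≤ ∑ i : Fin N, a i := Finset.sum_le_sum_of_subset (Finset.subset_univ _)
    _ ≤ ∑ _i : Fin N, d := Finset.sum_le_sum fun i _ => ha i
    _ = N * d := by rw [Finset.sum_const, Finset.card_univ, Fintype.card_fin, smul_eq_mul]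

lemma sum_card_Bt (N d : ℕ) (hN : 0 < N) :
    ∑ t ∈ Finset.range ((d+1)*N), (Bt N d t).card = (d+1)^N := by
  rw [← card_box N d]
  exact (Finset.card_eq_sum_card_fiberwise (fun a ha => by
    rw [Finset.mem_coe, Finset.mem_range]
    have := degree_le_of_inBox (mem_box.mp (Finset.mem_coe.mp ha))
    calc a.degree ≤ N * d := this
      _ < (d+1) * N := by nlinarith)).symm

/-! ### The evaluation map at the points -/

section Lower

variable [Field K]

noncomputable def Elm {r : ℕ} (p : Fin r → Fin N → K) :
    MvPolynomial (Fin N) K →ₗ[K] (Fin r → K) :=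
  LinearMap.pi fun j =>
    { toFun := eval (p j)
      map_add' := fun a b => map_add _ a b
      map_smul' := fun c a => by simp [MvPolynomial.smul_eval] }

lemma Elm_apply {r : ℕ} (p : Fin r → Fin N → K) (g : MvPolynomial (Fin N) K) (j : Fin r) :
    Elm p g j = eval (p j) g := rfl

lemma degree_eq_univ_sum (a : Fin N →₀ ℕ) : a.degree = ∑ i, a i := by
  rw [Finsupp.degree]
  exact Finset.sum_subset (Finset.subset_univ _)
    (fun i _ hi => Finsupp.notMem_support_iff.mp hi)

lemma eval_smul_homog {t : ℕ} {h : MvPolynomial (Fin N) K} (hh : h.IsHomogeneous t)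
    (c : K) (x : Fin N → K) : eval (c • x) h = c ^ t * eval x h := by
  rw [eval_eq', eval_eq', Finset.mul_sum]
  refine Finset.sum_congr rfl fun b hb => ?_
  have hdeg : ∑ i, b i = t := by
    rw [← degree_eq_univ_sum]
    by_contra hne
    exact MvPolynomial.mem_support_iff.mp hb (hh.coeff_eq_zero hne)
  calc coeff b h * ∏ i, (c • x) i ^ b i
      = coeff b h * ∏ i, (c ^ b i * x i ^ b i) := by
        simp [Pi.smul_apply, smul_eq_mul, mul_pow]
    _ = coeff b h * ((∏ i, c ^ b i) * ∏ i, x i ^ b i) := by rw [Finset.prod_mul_distrib]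
    _ = c ^ t * (coeff b h * ∏ i, x i ^ b i) := by
        rw [Finset.prod_pow_eq_pow_sum, hdeg]; ring

variable [CharZero K] {r : ℕ}

lemma homog_ker_box {d : ℕ} {p : Fin r → Fin N → K}
    (Hsub : pointsIdeal p ⊆ perp ((∏ i, (X i : MvPolynomial (Fin N) K)) ^ d))
    {t : ℕ} {h : MvPolynomial (Fin N) K}
    (hh : h ∈ homogeneousSubmodule (Fin N) K t) (hE : Elm p h = 0) :
    ∀ a, InBox d a → coeff a h = 0 := by
  rw [mem_homogeneousSubmodule] at hh
  have hmem : h ∈ pointsIdeal p := by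
    intro j c
    rw [eval_smul_homog hh c (p j)]
    have : eval (p j) h = 0 := by
      have := congrFun hE j
      rw [Elm_apply] at this
      simpa using this
    rw [this, mul_zero]
  exact fun a ha => (mem_perp_iff d h).mp (Hsub hmem) a ha

noncomputable def BoxSpan (K : Type*) [Field K] (N d t : ℕ) :
    Submodule K (MvPolynomial (Fin N) K) :=
  Submodule.span K ((fun a => (monomial a (1:K))) '' ((Bt N d t) : Set (Fin N →₀ ℕ)))

lemma BoxSpan_le_homog (d t : ℕ) :
    BoxSpan K N d t ≤ homogeneousSubmodule (Fin N) K t := by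
  rw [BoxSpan, Submodule.span_le]
  rintro _ ⟨a, ha, rfl⟩
  rw [SetLike.mem_coe, mem_homogeneousSubmodule]
  exact isHomogeneous_monomial 1 (mem_Bt.mp ha).2

lemma coeff_BoxSpan {d t : ℕ} {g : MvPolynomial (Fin N) K} (hg : g ∈ BoxSpan K N d t)
    {a : Fin N →₀ ℕ} (ha : a ∉ Bt N d t) : coeff a g = 0 := by
  induction hg using Submodule.span_induction with
  | mem x hx =>
    obtain ⟨b, hb, rfl⟩ := hx
    rw [coeff_monomial, if_neg]
    rintro rfl
    exact ha hb
  | zero => simp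
  | add x y _ _ hx hy => rw [coeff_add, hx, hy, add_zero]
  | smul c x _ hx => rw [coeff_smul, hx, smul_zero]

lemma finrank_BoxSpan (d t : ℕ) :
    Module.finrank K ↥(BoxSpan K N d t) = (Bt N d t).card := by
  classical
  have hli : LinearIndependent K
      (fun a : (Bt N d t) => (monomial (a : Fin N →₀ ℕ) (1:K))) := by
    have h2 := (basisMonomials (Fin N) K).linearIndependent.comp
      ((↑) : (Bt N d t) → (Fin N →₀ ℕ)) Subtype.val_injective
    simp only [coe_basisMonomials] at h2
    exact h2
  have hfr := finrank_span_eq_card hli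
  have himg : (fun a => (monomial a (1:K))) '' ((Bt N d t) : Set (Fin N →₀ ℕ))
      = Set.range (fun a : (Bt N d t) => (monomial (a : Fin N →₀ ℕ) (1:K))) := by
    rw [Set.image_eq_range]; rfl
  rw [BoxSpan, himg, hfr, Fintype.card_coe]

lemma finrank_map_BoxSpan {d : ℕ} {p : Fin r → Fin N → K}
    (Hsub : pointsIdeal p ⊆ perp ((∏ i, (X i : MvPolynomial (Fin N) K)) ^ d)) (t : ℕ) :
    Module.finrank K ↥(Submodule.map (Elm p) (BoxSpan K N d t)) = (Bt N d t).card := by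
  classical
  haveI : FiniteDimensional K ↥(BoxSpan K N d t) :=
    FiniteDimensional.span_of_finite K ((Bt N d t).finite_toSet.image _)
  set W := BoxSpan K N d t with hW
  set φ := (Elm p).comp W.subtype with hφ
  have hker : LinearMap.ker φ = ⊥ := by
    rw [LinearMap.ker_eq_bot']
    intro x hx
    have hE : Elm p (x : MvPolynomial (Fin N) K) = 0 := hx
    have hbox : ∀ a, InBox d a → coeff a (x : MvPolynomial (Fin N) K) = 0 :=
      homog_ker_box Hsub (BoxSpan_le_homog d t x.2) hE
    have hzero : (x : MvPolynomial (Fin N) K) = 0 := by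
      rw [MvPolynomial.eq_zero_iff]
      intro a
      by_cases hmem : a ∈ Bt N d t
      · exact hbox a (mem_Bt.mp hmem).1
      · exact coeff_BoxSpan x.2 hmem
    exact Subtype.ext hzero
  have h2 := LinearMap.finrank_range_add_finrank_ker φ
  rw [hker, finrank_bot, add_zero] at h2
  have h3 : LinearMap.range φ = Submodule.map (Elm p) W := by
    rw [hφ, LinearMap.range_comp, Submodule.range_subtype]
  rw [← h3, h2, hW, finrank_BoxSpan]

noncomputable def Usub {r : ℕ} (p : Fin r → Fin N → K) (t : ℕ) :
    Submodule K (Fin r → K) :=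
  Submodule.map (Elm p) (homogeneousSubmodule (Fin N) K t)

lemma finrank_Usub_le (p : Fin r → Fin N → K) (t : ℕ) :
    Module.finrank K ↥(Usub p t) ≤ r := by
  calc Module.finrank K ↥(Usub p t) ≤ Module.finrank K (Fin r → K) :=
        Submodule.finrank_le _
    _ = r := by rw [Module.finrank_pi, Fintype.card_fin]

lemma base_card_le {d : ℕ} {p : Fin r → Fin N → K}
    (Hsub : pointsIdeal p ⊆ perp ((∏ i, (X i : MvPolynomial (Fin N) K)) ^ d)) (t : ℕ) :
    (Bt N d t).card ≤ Module.finrank K ↥(Usub p t) := by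
  rw [← finrank_map_BoxSpan Hsub t]
  exact Submodule.finrank_mono (Submodule.map_mono (BoxSpan_le_homog d t))

end Lower


section Step

set_option linter.unusedSectionVars false

variable [Field K] [CharZero K] {r : ℕ}

lemma coeff_psi_mul {d : ℕ} (c : Fin N → K) (h : MvPolynomial (Fin N) K)
    {a : Fin N →₀ ℕ} (ha : InBox d a) :
    coeff a ((∑ i, C (c i) * X i ^ (d+1)) * h) = 0 := by
  rw [Finset.sum_mul, coeff_sum]
  refine Finset.sum_eq_zero fun i _ => ?_
  have hns : ¬ (Finsupp.single i (d+1) ≤ a) := by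
    rw [Finsupp.single_le_iff, not_le]
    exact Nat.lt_succ_of_le (ha i)
  rw [mul_assoc, coeff_C_mul, X_pow_eq_monomial, coeff_monomial_mul', if_neg hns, mul_zero]

lemma psi_homog {d : ℕ} (c : Fin N → K) :
    ((∑ i, C (c i) * X i ^ (d+1)) : MvPolynomial (Fin N) K).IsHomogeneous (d+1) := by
  apply MvPolynomial.IsHomogeneous.sum
  intro i _
  have h1 : (C (c i) : MvPolynomial (Fin N) K).IsHomogeneous 0 := isHomogeneous_C _ _
  have h2 : ((X i : MvPolynomial (Fin N) K) ^ (d+1)).IsHomogeneous (d+1) := by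
    rw [X_pow_eq_monomial]
    refine isHomogeneous_monomial _ ?_
    rw [degree_eq_univ_sum]
    simp [Finsupp.single_apply, Finset.sum_add_distrib]
  simpa using h1.mul h2

set_option synthInstance.maxHeartbeats 1000000 in
set_option maxHeartbeats 2000000 in
lemma step_ineq {d : ℕ} {p : Fin r → Fin N → K}
    (Hsub : pointsIdeal p ⊆ perp ((∏ i, (X i : MvPolynomial (Fin N) K)) ^ d))
    (c : Fin N → K) (hc : ∀ j, eval (p j) (∑ i, C (c i) * X i ^ (d+1)) ≠ 0) (t : ℕ) :
    Module.finrank K ↥(Usub p t) + (Bt N d (t+(d+1))).card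
      ≤ Module.finrank K ↥(Usub p (t+(d+1))) := by
  classical
  set ψ : MvPolynomial (Fin N) K := ∑ i, C (c i) * X i ^ (d+1) with hψ
  set Dq : (Fin r → K) ≃ₗ[K] (Fin r → K) :=
    LinearEquiv.piCongrRight (fun j => LinearEquiv.smulOfNeZero K K _ (hc j)) with hDq
  have hcomm : (Elm p).comp (LinearMap.mulLeft K ψ)
      = (Dq : (Fin r → K) →ₗ[K] (Fin r → K)).comp (Elm p) := by
    apply LinearMap.ext
    intro g
    funext j
    have hev : eval (p j) (ψ * g) = eval (p j) ψ * eval (p j) g := map_mul _ _ _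
    simp only [LinearMap.coe_comp, Function.comp_apply, LinearMap.mulLeft_apply,
      LinearEquiv.coe_coe, hDq, LinearEquiv.piCongrRight_apply,
      LinearEquiv.smulOfNeZero_apply, smul_eq_mul, Units.smul_def, Units.val_mk0]
    rw [Elm_apply, Elm_apply, hev]
  set M2 := Submodule.map (Elm p) (BoxSpan K N d (t+(d+1))) with hM2
  set V := Submodule.map (Elm p)
    (Submodule.map (LinearMap.mulLeft K ψ) (homogeneousSubmodule (Fin N) K t)) with hV
  have hV_eq : V = Submodule.map (Dq : (Fin r → K) →ₗ[K] (Fin r → K)) (Usub p t) := by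
    rw [hV, Usub, ← Submodule.map_comp, ← Submodule.map_comp, hcomm]
  have hVrank : Module.finrank K ↥V = Module.finrank K ↥(Usub p t) := by
    rw [hV_eq]
    exact LinearEquiv.finrank_map_eq Dq (Usub p t)
  have hM2rank : Module.finrank K ↥M2 = (Bt N d (t+(d+1))).card := finrank_map_BoxSpan Hsub _
  have hM2le : M2 ≤ Usub p (t+(d+1)) := Submodule.map_mono (BoxSpan_le_homog _ _)
  have hmul_le : Submodule.map (LinearMap.mulLeft K ψ) (homogeneousSubmodule (Fin N) K t)
      ≤ homogeneousSubmodule (Fin N) K (t+(d+1)) := by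
    rintro x hx
    obtain ⟨h, hh, rfl⟩ := hx
    have hh' : h.IsHomogeneous t := hh
    have hres := (psi_homog (d := d) c).mul hh'
    have hgoal : ((LinearMap.mulLeft K ψ) h).IsHomogeneous (t + (d+1)) := by
      rw [LinearMap.mulLeft_apply]
      simpa [add_comm] using hres
    exact hgoal
  have hVle : V ≤ Usub p (t+(d+1)) := by
    rw [hV, Usub]
    exact Submodule.map_mono hmul_le
  have hdisj : M2 ⊓ V = ⊥ := by
    rw [eq_bot_iff]
    rintro x ⟨hxM, hxV⟩
    obtain ⟨b, hb, hxb⟩ := hxM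
    obtain ⟨g', hg', hxg⟩ := hxV
    obtain ⟨h, hh, rfl⟩ := hg'
    have hdiff : Elm p (b - ψ * h) = 0 := by
      have : (LinearMap.mulLeft K ψ) h = ψ * h := rfl
      rw [map_sub, hxb]
      rw [this] at hxg
      rw [hxg, sub_self]
    have hhomdiff : b - ψ * h ∈ homogeneousSubmodule (Fin N) K (t+(d+1)) := by
      refine Submodule.sub_mem _ (BoxSpan_le_homog _ _ hb) ?_
      exact hmul_le (Submodule.mem_map_of_mem hh)
    have hbox := homog_ker_box Hsub hhomdiff hdiff
    have hb0 : b = 0 := by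
      rw [MvPolynomial.eq_zero_iff]
      intro a
      by_cases hmem : a ∈ Bt N d (t+(d+1))
      · have h1 := hbox a (mem_Bt.mp hmem).1
        rw [coeff_sub, coeff_psi_mul c h (mem_Bt.mp hmem).1, sub_zero] at h1
        exact h1
      · exact coeff_BoxSpan hb hmem
    rw [Submodule.mem_bot, ← hxb, hb0, map_zero]
  have hsum := Submodule.finrank_sup_add_finrank_inf_eq M2 V
  rw [hdisj, finrank_bot, add_zero] at hsum
  have hle : M2 ⊔ V ≤ Usub p (t+(d+1)) := sup_le hM2le hVle
  calc Module.finrank K ↥(Usub p t) + (Bt N d (t+(d+1))).card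
      = Module.finrank K ↥M2 + Module.finrank K ↥V := by rw [hVrank, hM2rank]; ring
    _ = Module.finrank K ↥(M2 ⊔ V) := hsum.symm
    _ ≤ Module.finrank K ↥(Usub p (t+(d+1))) := Submodule.finrank_mono hle

lemma chain_ineq {d : ℕ} {p : Fin r → Fin N → K}
    (Hsub : pointsIdeal p ⊆ perp ((∏ i, (X i : MvPolynomial (Fin N) K)) ^ d))
    (c : Fin N → K) (hc : ∀ j, eval (p j) (∑ i, C (c i) * X i ^ (d+1)) ≠ 0) (ρ : ℕ) :
    ∀ k : ℕ, ∑ j ∈ Finset.range (k+1), (Bt N d (ρ + j*(d+1))).card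
      ≤ Module.finrank K ↥(Usub p (ρ + k*(d+1))) := by
  intro k
  induction k with
  | zero =>
    rw [Finset.sum_range_one]
    have harith : ρ + 0 * (d+1) = ρ := by ring
    rw [harith]
    exact base_card_le Hsub ρ
  | succ k ih =>
    rw [Finset.sum_range_succ]
    have h2 := step_ineq Hsub c hc (ρ + k*(d+1))
    have harith : ρ + (k+1)*(d+1) = (ρ + k*(d+1)) + (d+1) := by ring
    rw [harith]
    omega

lemma exists_avoid [Infinite K] {r : ℕ} (q : Fin r → Fin N → K)
    (hq : ∀ j, ∃ i, q j i ≠ 0) :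
    ∃ c : Fin N → K, ∀ j, (∑ i, c i * q j i) ≠ 0 := by
  classical
  by_contra hcon
  push_neg at hcon
  have hP : (∏ j, (∑ i, (C (q j i) * X i : MvPolynomial (Fin N) K))) = 0 := by
    apply MvPolynomial.funext
    intro x
    rw [map_zero, map_prod]
    obtain ⟨j, hj⟩ := hcon x
    refine Finset.prod_eq_zero (Finset.mem_univ j) ?_
    rw [map_sum]
    rw [← hj]
    refine Finset.sum_congr rfl fun i _ => ?_
    simp [mul_comm]
  obtain ⟨j, -, hj⟩ := Finset.prod_eq_zero_iff.mp hP
  obtain ⟨i0, hi0⟩ := hq j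
  apply hi0
  have := congrArg (coeff (Finsupp.single i0 1)) hj
  rw [coeff_sum, coeff_zero] at this
  rw [← this]
  rw [Finset.sum_eq_single_of_mem i0 (Finset.mem_univ _)]
  · rw [coeff_C_mul, coeff_X, if_pos rfl, mul_one]
  · intro i _ hii
    rw [coeff_C_mul, coeff_X', if_neg, mul_zero]
    exact fun h => hii (Finsupp.single_left_injective one_ne_zero h)

lemma range_mul_sum (f : ℕ → ℕ) (a : ℕ) : ∀ b : ℕ,
    ∑ t ∈ Finset.range (a*b), f t = ∑ ρ ∈ Finset.range a, ∑ j ∈ Finset.range b, f (ρ + j*a)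
  | 0 => by simp
  | (b+1) => by
    have hsplit : ∑ t ∈ Finset.range (a*b + a), f t
        = ∑ t ∈ Finset.range (a*b), f t + ∑ ρ ∈ Finset.range a, f (a*b + ρ) := by
      have h1 : ∑ t ∈ Finset.range (a*b), f t + ∑ t ∈ Finset.Ico (a*b) (a*b+a), f t
          = ∑ t ∈ Finset.range (a*b+a), f t := by
        rw [Finset.range_eq_Ico, Finset.range_eq_Ico]
        exact Finset.sum_Ico_consecutive f (Nat.zero_le _) (Nat.le_add_right _ _)
      have h2 : ∑ t ∈ Finset.Ico (a*b) (a*b+a), f t = ∑ ρ ∈ Finset.range a, f (a*b + ρ) := by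
        rw [Finset.sum_Ico_eq_sum_range, Nat.add_sub_cancel_left]
      rw [← h1, h2]
    rw [Nat.mul_succ, hsplit, range_mul_sum f a b]
    have hrhs : ∀ ρ, ∑ j ∈ Finset.range (b+1), f (ρ + j*a)
        = (∑ j ∈ Finset.range b, f (ρ + j*a)) + f (a*b + ρ) := by
      intro ρ
      rw [Finset.sum_range_succ]
      congr 1
      ring_nf
    simp_rw [hrhs]
    rw [Finset.sum_add_distrib]

lemma lower_bound {n d r : ℕ} (p : Fin r → Fin (n+1) → K)
    (hp0 : ∀ j, p j ≠ 0)
    (Hsub : pointsIdeal p ⊆ perp ((∏ i, (X i : MvPolynomial (Fin (n+1)) K)) ^ d)) :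
    (d+1)^n ≤ r := by
  classical
  have hq : ∀ j, ∃ i, (p j i)^(d+1) ≠ 0 := by
    intro j
    obtain ⟨i, hi⟩ : ∃ i, p j i ≠ 0 := by
      by_contra hall
      push_neg at hall
      exact hp0 j (funext hall)
    exact ⟨i, pow_ne_zero _ hi⟩
  obtain ⟨c, hc⟩ := exists_avoid _ hq
  have hc' : ∀ j, eval (p j) (∑ i, C (c i) * X i ^ (d+1)) ≠ 0 := by
    intro j
    rw [map_sum]
    have : ∀ i, eval (p j) (C (c i) * X i ^ (d+1)) = c i * (p j i)^(d+1) := by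
      intro i
      simp
    simp_rw [this]
    exact hc j
  have hchain : ∀ ρ ∈ Finset.range (d+1),
      ∑ j ∈ Finset.range (n+1), (Bt (n+1) d (ρ + j*(d+1))).card ≤ r := by
    intro ρ _
    calc ∑ j ∈ Finset.range (n+1), (Bt (n+1) d (ρ + j*(d+1))).card
        ≤ Module.finrank K ↥(Usub p (ρ + n*(d+1))) := chain_ineq Hsub c hc' ρ n
      _ ≤ r := finrank_Usub_le p _
  have htotal : (d+1)^(n+1) ≤ (d+1) * r := by
    rw [← sum_card_Bt (n+1) d (Nat.succ_pos n), range_mul_sum _ (d+1) (n+1)]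
    calc ∑ ρ ∈ Finset.range (d+1), ∑ j ∈ Finset.range (n+1), (Bt (n+1) d (ρ + j*(d+1))).card
        ≤ ∑ _ρ ∈ Finset.range (d+1), r := Finset.sum_le_sum hchain
      _ = (d+1) * r := by rw [Finset.sum_const, Finset.card_range, smul_eq_mul]
  have h2 : (d+1) * (d+1)^n ≤ (d+1) * r := by
    calc (d+1) * (d+1)^n = (d+1)^(n+1) := (pow_succ' _ _).symm
      _ ≤ (d+1) * r := htotal
  exact Nat.le_of_mul_le_mul_left h2 (Nat.succ_pos d)

end Step


section Upper

set_option linter.unusedSectionVars false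

variable [Field K]

lemma pow_mod_root {d : ℕ} {ζ : K} (hζ : ζ ^ (d+1) = 1) (b : ℕ) :
    ζ ^ b = ζ ^ (b % (d+1)) := by
  conv_lhs => rw [← Nat.div_add_mod b (d+1)]
  rw [pow_add, pow_mul, hζ, one_pow, one_mul]

lemma dft {d : ℕ} {ζ : K} (hζ : IsPrimitiveRoot ζ (d+1)) :
    ∀ (m : ℕ) (G : (Fin m → Fin (d+1)) → K),
      (∀ ρ : Fin m → Fin (d+1),
        ∑ a : Fin m → Fin (d+1), G a * ∏ i, ζ ^ ((a i : ℕ) * (ρ i : ℕ)) = 0) →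
      ∀ a, G a = 0 := by
  intro m
  induction m with
  | zero =>
    intro G hG a
    have h := hG a
    rw [Fintype.sum_subsingleton _ a] at h
    simpa using h
  | succ m ih =>
    intro G hG a
    have key : ∀ (a0 : Fin (d+1)) (a' : Fin m → Fin (d+1)), G (Fin.cons a0 a') = 0 := by
      intro a0
      have happ : ∀ ρ' : Fin m → Fin (d+1),
          ∑ a' : Fin m → Fin (d+1),
            G (Fin.cons a0 a') * ∏ i, ζ ^ ((a' i : ℕ) * (ρ' i : ℕ)) = 0 := by
        intro ρ'
        set b : Fin (d+1) → K := fun k => ∑ a' : Fin m → Fin (d+1),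
          G (Fin.cons k a') * ∏ i, ζ ^ ((a' i : ℕ) * (ρ' i : ℕ)) with hb
        have hQ : ∀ ρ0 : Fin (d+1), ∑ k : Fin (d+1), b k * (ζ ^ (ρ0 : ℕ)) ^ (k : ℕ) = 0 := by
          intro ρ0
          have h := hG (Fin.cons ρ0 ρ')
          have hsplit : ∑ a : Fin (m+1) → Fin (d+1),
              G a * ∏ i, ζ ^ ((a i : ℕ) * ((Fin.cons ρ0 ρ' : Fin (m+1) → Fin (d+1)) i : ℕ))
              = ∑ x : Fin (d+1) × (Fin m → Fin (d+1)),
                G (Fin.cons x.1 x.2) * ∏ i, ζ ^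
                  (((Fin.cons x.1 x.2 : Fin (m+1) → Fin (d+1)) i : ℕ)
                    * ((Fin.cons ρ0 ρ' : Fin (m+1) → Fin (d+1)) i : ℕ)) := by
            rw [← Equiv.sum_comp (Fin.consEquiv (fun _ : Fin (m+1) => Fin (d+1)))]
            rfl
          rw [hsplit, Fintype.sum_prod_type] at h
          rw [← h]
          refine Finset.sum_congr rfl fun a0' _ => ?_
          rw [hb, Finset.sum_mul]
          refine Finset.sum_congr rfl fun a' _ => ?_
          rw [Fin.prod_univ_succ]
          simp only [Fin.cons_zero, Fin.cons_succ]
          have hz2 : (ζ ^ (ρ0 : ℕ)) ^ (a0' : ℕ) = ζ ^ ((a0' : ℕ) * (ρ0 : ℕ)) := by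
            rw [← pow_mul, mul_comm]
          rw [hz2]
          ring
        have hbz : ∀ k, b k = 0 := by
          set Q : Polynomial K := ∑ k : Fin (d+1),
            Polynomial.C (b k) * Polynomial.X ^ (k : ℕ) with hQdef
          have hdeg : Q.natDegree ≤ d :=
            Polynomial.natDegree_sum_le_of_forall_le _ _ (fun k _ =>
              le_trans (Polynomial.natDegree_C_mul_X_pow_le _ _) (Nat.lt_succ_iff.mp k.isLt))
          have hevalQ : ∀ ρ0 : Fin (d+1), Q.eval (ζ ^ (ρ0 : ℕ)) = 0 := by
            intro ρ0
            rw [hQdef, Polynomial.eval_finset_sum]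
            have hrw : ∀ k : Fin (d+1), Polynomial.eval (ζ ^ (ρ0 : ℕ))
                (Polynomial.C (b k) * Polynomial.X ^ (k : ℕ))
                = b k * (ζ ^ (ρ0 : ℕ)) ^ (k : ℕ) := by
              intro k
              rw [Polynomial.eval_mul, Polynomial.eval_C, Polynomial.eval_pow,
                Polynomial.eval_X]
            rw [Finset.sum_congr rfl fun k _ => hrw k]
            exact hQ ρ0
          have hinj : Function.Injective (fun ρ0 : Fin (d+1) => ζ ^ (ρ0 : ℕ)) := by
            intro x y hxy
            exact Fin.ext (hζ.pow_inj x.isLt y.isLt hxy)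
          have hQ0 : Q = 0 :=
            Polynomial.eq_zero_of_natDegree_lt_card_of_eval_eq_zero Q hinj hevalQ
              (by rw [Fintype.card_fin]; omega)
          intro k
          have hco := congrArg (fun q : Polynomial K => q.coeff (k : ℕ)) hQ0
          simp only [hQdef, Polynomial.finset_sum_coeff, Polynomial.coeff_C_mul,
            Polynomial.coeff_X_pow, Polynomial.coeff_zero] at hco
          rw [Finset.sum_eq_single_of_mem k (Finset.mem_univ _)] at hco
          · simpa using hco
          · intro k' _ hk'
            rw [if_neg, mul_zero]
            exact fun hh => hk' (Fin.ext hh.symm)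
        exact hbz a0
      exact ih (fun a' => G (Fin.cons a0 a')) happ
    have h2 := key (a 0) (Fin.tail a)
    rwa [Fin.cons_self_tail] at h2

lemma comp_eval_zero [CharZero K] (x : Fin N → K) (g : MvPolynomial (Fin N) K)
    (hg : ∀ c : K, eval (c • x) g = 0) (t : ℕ) :
    eval x (homogeneousComponent t g) = 0 := by
  haveI : Infinite K := Infinite.of_injective (Nat.cast : ℕ → K) Nat.cast_injective
  by_cases hle : t ≤ g.totalDegree
  swap
  · rw [homogeneousComponent_eq_zero _ g (lt_of_not_ge hle), map_zero]
  set P : Polynomial K := ∑ s ∈ Finset.range (g.totalDegree + 1),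
    Polynomial.C (eval x (homogeneousComponent s g)) * Polynomial.X ^ s with hP
  have hPeval : ∀ cc : K, P.eval cc = 0 := by
    intro cc
    rw [hP, Polynomial.eval_finset_sum]
    have h1 : ∀ s, Polynomial.eval cc (Polynomial.C (eval x (homogeneousComponent s g))
        * Polynomial.X ^ s) = eval (cc • x) (homogeneousComponent s g) := by
      intro s
      rw [eval_smul_homog (homogeneousComponent_isHomogeneous s g) cc x,
        Polynomial.eval_mul, Polynomial.eval_C, Polynomial.eval_pow, Polynomial.eval_X,
        mul_comm]
    rw [Finset.sum_congr rfl fun s _ => h1 s, ← map_sum, sum_homogeneousComponent]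
    exact hg cc
  have hP0 : P = 0 := Polynomial.funext (fun r => by rw [hPeval r, Polynomial.eval_zero])
  have hco := congrArg (fun q : Polynomial K => q.coeff t) hP0
  simp only [hP, Polynomial.finset_sum_coeff, Polynomial.coeff_C_mul,
    Polynomial.coeff_X_pow, Polynomial.coeff_zero] at hco
  rw [Finset.sum_eq_single_of_mem t (Finset.mem_range.mpr (Nat.lt_succ_of_le hle))] at hco
  · simpa using hco
  · intro s _ hst
    rw [if_neg (fun hh => hst hh.symm), mul_zero]

variable {n d : ℕ}

noncomputable def pts (n d : ℕ) (ζ : K) (ρ : Fin n → Fin (d+1)) : Fin (n+1) → K :=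
  Fin.cons 1 (fun i => ζ ^ (ρ i : ℕ))

lemma upper_box_coeff [CharZero K] {ζ : K} (hζ : IsPrimitiveRoot ζ (d+1)) {t : ℕ}
    {h : MvPolynomial (Fin (n+1)) K} (hh : h.IsHomogeneous t)
    (hz : ∀ ρ : Fin n → Fin (d+1), eval (pts n d ζ ρ) h = 0)
    {a : Fin (n+1) →₀ ℕ} (ha : InBox d a) (hat : a.degree = t) :
    coeff a h = 0 := by
  classical
  set cl : (Fin (n+1) →₀ ℕ) → (Fin n → Fin (d+1)) :=
    fun b i => ⟨b i.succ % (d+1), Nat.mod_lt _ (Nat.succ_pos d)⟩ with hcl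
  set G : (Fin n → Fin (d+1)) → K :=
    fun m => ∑ b ∈ h.support.filter (fun b => cl b = m), coeff b h with hG
  have hGzero : ∀ m, G m = 0 := by
    apply dft hζ n G
    intro ρ
    have hev := hz ρ
    rw [eval_eq'] at hev
    have hterm : ∀ b ∈ h.support, coeff b h * ∏ i, (pts n d ζ ρ) i ^ b i
        = coeff b h * ∏ i : Fin n, ζ ^ ((cl b i : ℕ) * (ρ i : ℕ)) := by
      intro b _
      congr 1
      rw [Fin.prod_univ_succ]
      simp only [pts, Fin.cons_zero, Fin.cons_succ, one_pow, one_mul]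
      refine Finset.prod_congr rfl fun i _ => ?_
      have h1 : (ζ ^ (ρ i : ℕ)) ^ (b i.succ) = (ζ ^ (b i.succ)) ^ (ρ i : ℕ) := by
        rw [← pow_mul, ← pow_mul, mul_comm]
      rw [h1, pow_mod_root hζ.pow_eq_one (b i.succ), ← pow_mul]
    rw [Finset.sum_congr rfl hterm] at hev
    rw [← Finset.sum_fiberwise h.support cl
      (fun b => coeff b h * ∏ i : Fin n, ζ ^ ((cl b i : ℕ) * (ρ i : ℕ)))] at hev
    have hfib : ∀ m : Fin n → Fin (d+1), G m * ∏ i : Fin n, ζ ^ ((m i : ℕ) * (ρ i : ℕ))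
        = ∑ b ∈ h.support.filter (fun b => cl b = m),
            coeff b h * ∏ i : Fin n, ζ ^ ((cl b i : ℕ) * (ρ i : ℕ)) := by
      intro m
      rw [hG, Finset.sum_mul]
      refine Finset.sum_congr rfl fun b hb => ?_
      rw [(Finset.mem_filter.mp hb).2]
    rw [Finset.sum_congr rfl (fun m _ => hfib m)]
    exact hev
  have hsub : h.support.filter (fun b => cl b = cl a) ⊆ {a} := by
    intro b hb
    rw [Finset.mem_singleton]
    obtain ⟨hbs, hbcl⟩ := Finset.mem_filter.mp hb
    have hdegb : b.degree = t := by
      by_contra hne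
      exact MvPolynomial.mem_support_iff.mp hbs (hh.coeff_eq_zero hne)
    have hcoord : ∀ i : Fin n, b i.succ % (d+1) = a i.succ := by
      intro i
      have h1 := congrFun hbcl i
      have hval : b i.succ % (d+1) = a i.succ % (d+1) := congrArg Fin.val h1
      rw [Nat.mod_eq_of_lt (Nat.lt_succ_of_le (ha i.succ))] at hval
      exact hval
    set q : Fin n → ℕ := fun i => b i.succ / (d+1) with hq
    have hbi : ∀ i, b i.succ = a i.succ + (d+1) * q i := by
      intro i
      have h1 := (Nat.div_add_mod (b i.succ) (d+1))
      rw [hcoord i] at h1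
      simp only [hq]
      omega
    have hdega : a 0 + ∑ i : Fin n, a i.succ = t := by
      rw [← hat, degree_eq_univ_sum, Fin.sum_univ_succ]
    have hdegb' : b 0 + ∑ i : Fin n, b i.succ = t := by
      rw [← hdegb, degree_eq_univ_sum, Fin.sum_univ_succ]
    have hsumb : ∑ i : Fin n, b i.succ
        = (∑ i : Fin n, a i.succ) + (d+1) * ∑ i, q i := by
      simp_rw [hbi]
      rw [Finset.sum_add_distrib, Finset.mul_sum]
    have ha0 : a 0 ≤ d := ha 0
    have hle : (d+1) * (∑ i, q i) ≤ d := by omega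
    have hqsum : ∑ i, q i = 0 := by
      by_contra hne
      have h1 : 1 ≤ ∑ i, q i := Nat.one_le_iff_ne_zero.mpr hne
      have h2 : (d+1) * 1 ≤ (d+1) * ∑ i, q i := Nat.mul_le_mul_left _ h1
      omega
    have hqi : ∀ i ∈ Finset.univ, q i = 0 := Finset.sum_eq_zero_iff.mp hqsum
    have hz3 : (d+1) * (∑ i : Fin n, q i) = 0 := by rw [hqsum, Nat.mul_zero]
    have hsumb2 : ∑ i : Fin n, b i.succ = ∑ i : Fin n, a i.succ := by omega
    refine Finsupp.ext fun i => ?_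
    refine Fin.cases ?_ ?_ i
    · omega
    · intro i'
      have h1 := hbi i'
      rw [hqi i' (Finset.mem_univ _)] at h1
      omega
  have hGa := hGzero (cl a)
  by_cases hmem : a ∈ h.support
  · have hfib : h.support.filter (fun b => cl b = cl a) = {a} := by
      refine Finset.Subset.antisymm hsub ?_
      intro b hb
      rw [Finset.mem_singleton] at hb
      subst hb
      exact Finset.mem_filter.mpr ⟨hmem, rfl⟩
    have hGa2 : ∑ b ∈ h.support.filter (fun b => cl b = cl a), coeff b h = 0 := hGa
    rw [hfib, Finset.sum_singleton] at hGa2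
    exact hGa2
  · exact MvPolynomial.notMem_support_iff.mp hmem

lemma upper_mem [CharZero K] [IsAlgClosed K] (n d : ℕ) :
    ∃ p : Fin ((d+1)^n) → Fin (n+1) → K, (∀ j, p j ≠ 0) ∧
      (∀ j k, j ≠ k → ∀ c : K, p j ≠ c • p k) ∧
      pointsIdeal p ⊆ perp ((∏ i, (X i : MvPolynomial (Fin (n+1)) K)) ^ d) := by
  classical
  haveI : NeZero ((d+1 : ℕ) : K) :=
    ⟨by exact_mod_cast (Nat.cast_ne_zero (R := K)).mpr (Nat.succ_ne_zero d)⟩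
  obtain ⟨ζ, hζ⟩ := HasEnoughRootsOfUnity.exists_primitiveRoot K (d+1)
  have hcard : Fintype.card (Fin n → Fin (d+1)) = (d+1)^n := by
    rw [Fintype.card_fun, Fintype.card_fin, Fintype.card_fin]
  set e : Fin ((d+1)^n) ≃ (Fin n → Fin (d+1)) := (Fintype.equivFinOfCardEq hcard).symm with he
  have hptzero : ∀ ρ, pts n d ζ ρ ≠ (0 : Fin (n+1) → K) := by
    intro ρ hρ
    have h1 := congrFun hρ 0
    simp only [pts, Fin.cons_zero, Pi.zero_apply] at h1
    exact one_ne_zero h1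
  have hptinj : Function.Injective (pts n d ζ) := by
    intro ρ ρ' hpp
    funext i
    have h1 := congrFun hpp i.succ
    simp only [pts, Fin.cons_succ] at h1
    exact Fin.ext (hζ.pow_inj (ρ i).isLt (ρ' i).isLt h1)
  refine ⟨fun j => pts n d ζ (e j), fun j => hptzero (e j), ?_, ?_⟩
  · intro j k hjk c heq
    have h0 := congrFun heq 0
    simp only [pts, Fin.cons_zero, Pi.smul_apply, smul_eq_mul, mul_one] at h0
    rw [← h0, one_smul] at heq
    exact hjk (e.injective (hptinj heq))
  · intro g hg
    rw [mem_perp_iff d g]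
    intro a ha
    have hcomp : ∀ ρ, eval (pts n d ζ ρ) (homogeneousComponent a.degree g) = 0 := by
      intro ρ
      refine comp_eval_zero (pts n d ζ ρ) g ?_ a.degree
      intro cc
      have h1 := hg (e.symm ρ) cc
      simpa only [Equiv.apply_symm_apply] using h1
    have h2 := upper_box_coeff hζ (homogeneousComponent_isHomogeneous a.degree g)
      hcomp ha rfl
    rw [coeff_homogeneousComponent, if_pos rfl] at h2
    exact h2

end Upper

end CCGAux


/-- For `F = (x₀⋯xₙ)^d` over an algebraically closed field of
characteristic zero, the rank of `F` equals `(d+1)ⁿ`. -/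
theorem rank_monomial_equal_exponents {K : Type*} [Field K] [IsAlgClosed K] [CharZero K]
    {n : ℕ} (d : ℕ) :
    symRank ((∏ i, (X i : MvPolynomial (Fin (n + 1)) K)) ^ d) = (d + 1) ^ n := by
  obtain ⟨p, hp0, hpd, hsub⟩ := CCGAux.upper_mem (K := K) n d
  apply le_antisymm
  · exact Nat.sInf_le ⟨p, hp0, hpd, hsub⟩
  · refine le_csInf ⟨(d+1)^n, p, hp0, hpd, hsub⟩ ?_
    rintro r ⟨p', hp0', -, hsub'⟩
    exact CCGAux.lower_bound p' hp0' hsub'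
end

section
/- For F = x_0^a x_1^b with a ≤ b, over an algebraically closed field of characteristic zero, the cactus rank of the binary form F equals a+1, realized by the scheme V(y_0^{a+1}) ⊂ P^1 of length a+1. -/
open MvPolynomial

noncomputable section CactusAux

variable {K : Type*} [Field K]

/-- Dehomogenization `y₀ ↦ z`, `y₁ ↦ 1`. -/
def Phi (K : Type*) [Field K] : MvPolynomial (Fin 2) K →ₐ[K] Polynomial K :=
  aeval ![Polynomial.X, 1]

lemma fin2_decomp (s : Fin 2 →₀ ℕ) :
    s = Finsupp.single 0 (s 0) + Finsupp.single 1 (s 1) := by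
  ext i
  fin_cases i <;> simp [Finsupp.single_apply]

lemma monomial_eq_prod (s : Fin 2 →₀ ℕ) (c : K) :
    (monomial s c : MvPolynomial (Fin 2) K) = C c * X 0 ^ (s 0) * X 1 ^ (s 1) := by
  rw [X_pow_eq_monomial, X_pow_eq_monomial, C_apply, monomial_mul, monomial_mul,
    mul_one, mul_one, zero_add, ← fin2_decomp]

lemma Phi_monomial (s : Fin 2 →₀ ℕ) (c : K) :
    Phi K (monomial s c) = Polynomial.C c * Polynomial.X ^ (s 0) := by
  rw [monomial_eq_prod]
  simp [Phi]

lemma Phi_X0 : Phi K (X 0) = Polynomial.X := by simp [Phi]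
lemma Phi_X1 : Phi K (X 1) = 1 := by simp [Phi]

lemma Phi_X0_mul (g : MvPolynomial (Fin 2) K) : Phi K (X 0 * g) = Polynomial.X * Phi K g := by
  rw [map_mul, Phi_X0]
lemma Phi_X1_mul (g : MvPolynomial (Fin 2) K) : Phi K (X 1 * g) = Phi K g := by
  rw [map_mul, Phi_X1, one_mul]

/-- Homogenization to degree `t`. -/
def Hg (K : Type*) [Field K] (t : ℕ) (p : Polynomial K) : MvPolynomial (Fin 2) K :=
  p.sum fun i c => monomial (Finsupp.single 0 i + Finsupp.single 1 (t - i)) c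

lemma Hg_add (t : ℕ) (p q : Polynomial K) : Hg K t (p + q) = Hg K t p + Hg K t q := by
  unfold Hg
  apply Polynomial.sum_add_index <;> simp

lemma Hg_monomial (t i : ℕ) (c : K) :
    Hg K t (Polynomial.monomial i c)
      = monomial (Finsupp.single 0 i + Finsupp.single 1 (t - i)) c := by
  unfold Hg
  rw [Polynomial.sum_monomial_index]
  simp

lemma Phi_Hg (t : ℕ) (p : Polynomial K) : Phi K (Hg K t p) = p := by
  induction p using Polynomial.induction_on' with
  | add p q hp hq => rw [Hg_add, map_add, hp, hq]
  | monomial i c =>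
      rw [Hg_monomial, Phi_monomial]
      simp [Finsupp.single_apply, Polynomial.C_mul_X_pow_eq_monomial]


lemma Hg_zero (t : ℕ) : Hg K t 0 = 0 := by
  unfold Hg; simp

lemma Hg_sum {α : Type*} (t : ℕ) (F : Finset α) (f : α → Polynomial K) :
    Hg K t (∑ x ∈ F, f x) = ∑ x ∈ F, Hg K t (f x) := by
  classical
  induction F using Finset.induction_on with
  | empty => simp [Hg_zero]
  | insert x s hx ih => rw [Finset.sum_insert hx, Finset.sum_insert hx, Hg_add, ih]

lemma fin2_degree (s : Fin 2 →₀ ℕ) : s.degree = s 0 + s 1 := by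
  rw [Finsupp.degree_apply, Finset.sum_subset (Finset.subset_univ s.support)]
  · exact Fin.sum_univ_two s
  · intro x _ hx
    simpa using (Finsupp.notMem_support_iff.mp hx)

lemma isHomog_apply {g : MvPolynomial (Fin 2) K} {t : ℕ} (h : g.IsHomogeneous t)
    {s : Fin 2 →₀ ℕ} (hs : s ∈ g.support) : s 0 + s 1 = t := by
  rw [← fin2_degree, Finsupp.degree_eq_weight_one]
  exact h (mem_support_iff.mp hs)

/-- `Hg t` is a left inverse of `Phi` on homogeneous polynomials of degree `t`. -/
lemma Hg_Phi {g : MvPolynomial (Fin 2) K} {t : ℕ} (h : g.IsHomogeneous t) :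
    Hg K t (Phi K g) = g := by
  conv_rhs => rw [← support_sum_monomial_coeff g]
  conv_lhs => rw [← support_sum_monomial_coeff g]
  rw [map_sum, Hg_sum]
  apply Finset.sum_congr rfl
  intro s hs
  rw [Phi_monomial, Polynomial.C_mul_X_pow_eq_monomial, Hg_monomial]
  congr 1
  have h1 : s 0 + s 1 = t := isHomog_apply h hs
  have : t - s 0 = s 1 := by omega
  rw [this, ← fin2_decomp]

/-- Injectivity of `Phi` on homogeneous polynomials. -/
lemma Phi_inj_homog {g g' : MvPolynomial (Fin 2) K} {t : ℕ} (h : g.IsHomogeneous t)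
    (h' : g'.IsHomogeneous t) (he : Phi K g = Phi K g') : g = g' := by
  rw [← Hg_Phi h, ← Hg_Phi h', he]

lemma Hg_isHomog {p : Polynomial K} {t : ℕ} (hp : p.degree < (t + 1 : ℕ)) :
    (Hg K t p).IsHomogeneous t := by
  unfold Hg
  rw [Polynomial.sum]
  apply IsHomogeneous.sum
  intro i hi
  apply isHomogeneous_monomial
  have hit : i ≤ t := by
    have := Polynomial.le_degree_of_mem_supp i hi
    have := lt_of_le_of_lt this hp
    exact_mod_cast Nat.lt_succ_iff.mp (by exact_mod_cast this)
  rw [fin2_degree]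
  simp [Finsupp.single_apply]
  omega

lemma Phi_degree_lt {g : MvPolynomial (Fin 2) K} {t : ℕ} (h : g.IsHomogeneous t) :
    (Phi K g) ∈ Polynomial.degreeLT K (t + 1) := by
  have hrepr : Phi K g = ∑ s ∈ g.support, Phi K (monomial s (coeff s g)) := by
    conv_lhs => rw [← support_sum_monomial_coeff g]
    rw [map_sum]
  rw [hrepr]
  apply Submodule.sum_mem
  intro s hs
  rw [Phi_monomial, Polynomial.mem_degreeLT]
  calc (Polynomial.C (coeff s g) * Polynomial.X ^ (s 0)).degree
      ≤ (s 0 : WithBot ℕ) := Polynomial.degree_C_mul_X_pow_le _ _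
    _ < ((t+1 : ℕ) : WithBot ℕ) := by
        have : s 0 ≤ t := by have := isHomog_apply h hs; omega
        exact_mod_cast Nat.lt_succ_of_le this

lemma pderiv_pow_monomial (i : Fin 2) (k : ℕ) (s : Fin 2 →₀ ℕ) (c : K) :
    (((pderiv i).toLinearMap : MvPolynomial (Fin 2) K →ₗ[K] MvPolynomial (Fin 2) K) ^ k)
        (monomial s c)
      = if k ≤ s i then monomial (s - Finsupp.single i k) (c * (s i).descFactorial k) else 0 := by
  induction k generalizing s c with
  | zero => simp
  | succ k ih =>
      rw [pow_succ, Module.End.mul_apply, Derivation.coeFn_coe, pderiv_monomial, ih]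
      have hsub : (s - (Finsupp.single i 1 : Fin 2 →₀ ℕ)) i = s i - 1 := by
        rw [Finsupp.tsub_apply, Finsupp.single_eq_same]
      rw [hsub]
      rcases Nat.eq_zero_or_pos (s i) with h0 | hpos
      · have hrhs : ¬ (k + 1 ≤ s i) := by omega
        rw [if_neg hrhs, h0]
        simp
      · obtain ⟨m, hm⟩ : ∃ m, s i = m + 1 := ⟨s i - 1, by omega⟩
        rw [hm, Nat.add_sub_cancel]
        by_cases hk : k ≤ m
        · rw [if_pos hk, if_pos (by omega)]
          have h1 : s - (Finsupp.single i 1 : Fin 2 →₀ ℕ) - Finsupp.single i k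
              = s - Finsupp.single i (k+1) := by
            rw [tsub_tsub, ← Finsupp.single_add, add_comm 1 k]
          rw [h1, Nat.succ_descFactorial_succ]
          congr 1
          push_cast
          ring
        · rw [if_neg hk, if_neg (by omega)]

lemma monOp_eq (s : Fin 2 →₀ ℕ) :
    monOp K s = ((pderiv 0).toLinearMap : MvPolynomial (Fin 2) K →ₗ[K] _) ^ (s 0)
      * ((pderiv 1).toLinearMap : MvPolynomial (Fin 2) K →ₗ[K] _) ^ (s 1) := by
  unfold monOp
  rw [List.ofFn_succ, List.ofFn_succ, List.ofFn_zero, List.prod_cons, List.prod_cons,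
    List.prod_nil, mul_one]
  rfl

lemma monOp_monomial_s15 (s μ : Fin 2 →₀ ℕ) (c : K) :
    monOp K s (monomial μ c)
      = if s 1 ≤ μ 1 ∧ s 0 ≤ μ 0 then
          monomial (μ - Finsupp.single 1 (s 1) - Finsupp.single 0 (s 0))
            (c * (μ 1).descFactorial (s 1) * (μ 0).descFactorial (s 0))
        else 0 := by
  rw [monOp_eq, Module.End.mul_apply, pderiv_pow_monomial]
  by_cases h1 : s 1 ≤ μ 1
  · rw [if_pos h1, pderiv_pow_monomial]
    have h0 : (μ - (Finsupp.single 1 (s 1) : Fin 2 →₀ ℕ)) 0 = μ 0 := by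
      rw [Finsupp.tsub_apply, Finsupp.single_apply, if_neg (by decide), Nat.sub_zero]
    rw [h0]
    by_cases h2 : s 0 ≤ μ 0
    · rw [if_pos h2, if_pos ⟨h1, h2⟩]
    · rw [if_neg h2, if_neg (by tauto)]
  · rw [if_neg h1, map_zero, if_neg (by tauto)]

/-- The exponent of `F = x₀^a x₁^b`. -/
def muF (a b : ℕ) : Fin 2 →₀ ℕ := Finsupp.single 0 a + Finsupp.single 1 b

lemma muF_apply_0 (a b : ℕ) : muF a b 0 = a := by
  simp [muF, Finsupp.single_apply]
lemma muF_apply_1 (a b : ℕ) : muF a b 1 = b := by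
  simp [muF, Finsupp.single_apply]

lemma F_eq (a b : ℕ) :
    (X 0 : MvPolynomial (Fin 2) K) ^ a * (X 1 : MvPolynomial (Fin 2) K) ^ b
      = monomial (muF a b) 1 := by
  rw [X_pow_eq_monomial, X_pow_eq_monomial, monomial_mul, mul_one]
  rfl

lemma apolarAct_eq_sum (g F : MvPolynomial (Fin 2) K) :
    apolarAct g F = ∑ s ∈ g.support, (coeff s g) • monOp K s F := by
  unfold apolarAct; rfl

/-- If every monomial of `g` has `y₀`-exponent `> a`, then `g` annihilates `F`. -/
lemma apolarAct_eq_zero_of_support (a b : ℕ) (g : MvPolynomial (Fin 2) K)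
    (h : ∀ s ∈ g.support, a + 1 ≤ s 0) :
    apolarAct g ((X 0 : MvPolynomial (Fin 2) K) ^ a * (X 1) ^ b) = 0 := by
  rw [F_eq, apolarAct_eq_sum]
  apply Finset.sum_eq_zero
  intro s hs
  rw [monOp_monomial_s15, muF_apply_0, muF_apply_1, if_neg, smul_zero]
  intro hc
  have := h s hs
  omega

lemma tau_apply_0 (a b : ℕ) (s : Fin 2 →₀ ℕ) :
    ((muF a b - Finsupp.single 1 (s 1) - Finsupp.single 0 (s 0) : Fin 2 →₀ ℕ)) 0
      = a - s 0 := by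
  rw [Finsupp.tsub_apply, Finsupp.tsub_apply, muF_apply_0]
  rw [Finsupp.single_apply, if_neg (by decide), Finsupp.single_eq_same]
  omega

/-- A nonzero homogeneous form of degree `≤ min a b` does not annihilate `F`. -/
lemma apolarAct_ne_zero [CharZero K] (a b d : ℕ) (hda : d ≤ a) (hdb : d ≤ b)
    (g : MvPolynomial (Fin 2) K) (hg : g.IsHomogeneous d) (hg0 : g ≠ 0) :
    apolarAct g ((X 0 : MvPolynomial (Fin 2) K) ^ a * (X 1) ^ b) ≠ 0 := by
  obtain ⟨s₀, hs₀⟩ := Finset.nonempty_of_ne_empty (fun h => hg0 (support_eq_empty.mp h))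
  have hkey : ∀ s ∈ g.support, s 0 ≤ a ∧ s 1 ≤ b := by
    intro s hs
    have := isHomog_apply hg hs
    omega
  set τ : Fin 2 →₀ ℕ :=
    muF a b - Finsupp.single 1 (s₀ 1) - Finsupp.single 0 (s₀ 0) with hτ
  intro hzero
  have hco : coeff τ (apolarAct g ((X 0 : MvPolynomial (Fin 2) K) ^ a * (X 1) ^ b)) = 0 := by
    rw [hzero, coeff_zero]
  rw [F_eq, apolarAct_eq_sum, coeff_sum] at hco
  rw [Finset.sum_eq_single s₀] at hco
  · rw [monOp_monomial_s15, muF_apply_0, muF_apply_1,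
      if_pos ⟨(hkey s₀ hs₀).2, (hkey s₀ hs₀).1⟩, coeff_smul, coeff_monomial,
      if_pos rfl, smul_eq_mul, one_mul] at hco
    rcases mul_eq_zero.mp hco with h | h
    · exact (mem_support_iff.mp hs₀) h
    · have hk0 := (hkey s₀ hs₀).1
      have hk1 := (hkey s₀ hs₀).2
      rcases mul_eq_zero.mp h with h' | h'
      · have : (b).descFactorial (s₀ 1) = 0 := by exact_mod_cast h'
        have := Nat.descFactorial_eq_zero_iff_lt.mp this
        omega
      · have : (a).descFactorial (s₀ 0) = 0 := by exact_mod_cast h'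
        have := Nat.descFactorial_eq_zero_iff_lt.mp this
        omega
  · intro s hs hne
    rw [monOp_monomial_s15, muF_apply_0, muF_apply_1, coeff_smul]
    by_cases hcond : s 1 ≤ b ∧ s 0 ≤ a
    · rw [if_pos hcond, coeff_monomial, if_neg, smul_zero]
      intro heq
      apply hne
      have h0 : a - s 0 = a - s₀ 0 := by
        have := congrArg (fun u : Fin 2 →₀ ℕ => u 0) heq
        simpa [tau_apply_0, muF_apply_0, hτ] using this
      have hs0 : s 0 = s₀ 0 := by
        have h1 := (hkey s hs).1
        have h2 := (hkey s₀ hs₀).1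
        omega
      have hs1 : s 1 = s₀ 1 := by
        have e1 := isHomog_apply hg hs
        have e2 := isHomog_apply hg hs₀
        omega
      rw [fin2_decomp s, fin2_decomp s₀, hs0, hs1]
    · rw [if_neg hcond, coeff_zero, smul_zero]
  · intro hns
    exact absurd hs₀ hns

lemma Hg_smul (t : ℕ) (c : K) (p : Polynomial K) : Hg K t (c • p) = c • Hg K t p := by
  unfold Hg
  rw [Polynomial.sum_smul_index _ _ _ (fun i => by simp), Polynomial.sum, Polynomial.sum,
    Finset.smul_sum]
  apply Finset.sum_congr rfl
  intro i _
  rw [← smul_eq_mul, smul_monomial]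

/-- `Hg t` as a linear map. -/
def HgL (K : Type*) [Field K] (t : ℕ) : Polynomial K →ₗ[K] MvPolynomial (Fin 2) K where
  toFun := Hg K t
  map_add' := Hg_add t
  map_smul' := Hg_smul t

/-- `Phi` as a linear map. -/
def PhiL (K : Type*) [Field K] : MvPolynomial (Fin 2) K →ₗ[K] Polynomial K :=
  (Phi K).toLinearMap

/-- The degree-`t` homogeneous part of `K[y₀,y₁]` is equivalent to polynomials of
degree `< t+1`. -/
def homogEquiv (t : ℕ) :
    (homogeneousSubmodule (Fin 2) K t) ≃ₗ[K] (Polynomial.degreeLT K (t+1)) :=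
  LinearEquiv.ofLinear
    (((PhiL K).comp (homogeneousSubmodule (Fin 2) K t).subtype).codRestrict
      (Polynomial.degreeLT K (t+1)) (fun g => Phi_degree_lt g.2))
    (((HgL K t).comp (Polynomial.degreeLT K (t+1)).subtype).codRestrict
      (homogeneousSubmodule (Fin 2) K t)
      (fun p => Hg_isHomog (Polynomial.mem_degreeLT.mp p.2)))
    (LinearMap.ext fun p => Subtype.ext (Phi_Hg t p.1))
    (LinearMap.ext fun g => Subtype.ext (Hg_Phi g.2))

instance degreeLT_finite (n : ℕ) : Module.Finite K (Polynomial.degreeLT K n) :=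
  Module.Finite.equiv (Polynomial.degreeLTEquiv K n).symm

instance homog_finite (t : ℕ) : Module.Finite K (homogeneousSubmodule (Fin 2) K t) :=
  Module.Finite.equiv (homogEquiv t).symm

lemma finrank_homog (t : ℕ) :
    Module.finrank K (homogeneousSubmodule (Fin 2) K t) = t + 1 := by
  rw [(homogEquiv (K := K) t).finrank_eq, (Polynomial.degreeLTEquiv K (t+1)).finrank_eq,
    Module.finrank_fin_fun]

/-- The degree-`t` part of `I`, dehomogenized. -/
def VS (K : Type*) [Field K] (I : Ideal (MvPolynomial (Fin 2) K)) (t : ℕ) :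
    Submodule K (Polynomial K) :=
  Submodule.map (PhiL K) ((I.restrictScalars K) ⊓ homogeneousSubmodule (Fin 2) K t)

lemma VS_mem {I : Ideal (MvPolynomial (Fin 2) K)} {t : ℕ} {p : Polynomial K} :
    p ∈ VS K I t ↔ ∃ g, (g ∈ I ∧ g.IsHomogeneous t) ∧ Phi K g = p := by
  constructor
  · rintro ⟨g, hg, rfl⟩
    exact ⟨g, ⟨hg.1, hg.2⟩, rfl⟩
  · rintro ⟨g, hg, rfl⟩
    exact ⟨g, ⟨hg.1, hg.2⟩, rfl⟩

lemma VS_le_degreeLT (I : Ideal (MvPolynomial (Fin 2) K)) (t : ℕ) :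
    VS K I t ≤ Polynomial.degreeLT K (t+1) := by
  rintro p hp
  obtain ⟨g, hg, rfl⟩ := VS_mem.mp hp
  exact Phi_degree_lt hg.2

lemma hilb_add_finrank (I : Ideal (MvPolynomial (Fin 2) K)) (t : ℕ) :
    hilb K I t + Module.finrank K (VS K I t) = t + 1 := by
  classical
  set M : Submodule K (MvPolynomial (Fin 2) K) :=
    (I.restrictScalars K) ⊓ homogeneousSubmodule (Fin 2) K t with hM
  have hcomap : Submodule.comap (homogeneousSubmodule (Fin 2) K t).subtype
      (I.restrictScalars K) = Submodule.comap (homogeneousSubmodule (Fin 2) K t).subtype M := by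
    ext x
    simp only [Submodule.mem_comap, hM, Submodule.mem_inf]
    exact ⟨fun h => ⟨h, x.2⟩, fun h => h.1⟩
  have h1 : Module.finrank K (Submodule.comap (homogeneousSubmodule (Fin 2) K t).subtype
      (I.restrictScalars K)) = Module.finrank K M := by
    rw [hcomap]
    exact (Submodule.comapSubtypeEquivOfLe inf_le_right).finrank_eq
  have h2 : Module.finrank K (VS K I t) = Module.finrank K M := by
    have hr : VS K I t = LinearMap.range ((PhiL K).comp M.subtype) := by
      rw [LinearMap.range_comp, Submodule.range_subtype]
      rfl
    rw [hr]
    apply LinearMap.finrank_range_of_inj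
    rintro ⟨g, hg⟩ ⟨g', hg'⟩ he
    exact Subtype.ext (Phi_inj_homog hg.2 hg'.2 he)
  have := Submodule.finrank_quotient_add_finrank
    (Submodule.comap (homogeneousSubmodule (Fin 2) K t).subtype (I.restrictScalars K))
  rw [finrank_homog] at this
  unfold hilb
  omega

lemma VS_mono (I : Ideal (MvPolynomial (Fin 2) K)) (t : ℕ) : VS K I t ≤ VS K I (t+1) := by
  rintro p hp
  obtain ⟨g, hg, rfl⟩ := VS_mem.mp hp
  refine VS_mem.mpr ⟨X 1 * g, ⟨I.mul_mem_left _ hg.1, ?_⟩, Phi_X1_mul g⟩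
  have := (isHomogeneous_X K (1 : Fin 2)).mul hg.2
  rwa [add_comm] at this

lemma VS_X_mul (I : Ideal (MvPolynomial (Fin 2) K)) (t : ℕ) {p : Polynomial K}
    (hp : p ∈ VS K I t) : Polynomial.X * p ∈ VS K I (t+1) := by
  obtain ⟨g, hg, rfl⟩ := VS_mem.mp hp
  refine VS_mem.mpr ⟨X 0 * g, ⟨I.mul_mem_left _ hg.1, ?_⟩, Phi_X0_mul g⟩
  have := (isHomogeneous_X K (0 : Fin 2)).mul hg.2
  rwa [add_comm] at this

/-- The key saturation descent property of the spaces `VS K I t`. -/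
lemma VS_sat {I : Ideal (MvPolynomial (Fin 2) K)} (hI : SatIdeal I) {t : ℕ} {p : Polynomial K}
    (hdeg : p.degree < ((t+1 : ℕ) : WithBot ℕ)) (h1 : p ∈ VS K I (t+1))
    (h2 : Polynomial.X * p ∈ VS K I (t+1)) : p ∈ VS K I t := by
  set g' := Hg K t p with hg'
  have hg'h : (Hg K t p).IsHomogeneous t := Hg_isHomog hdeg
  have hXg : ∀ i : Fin 2, X i * g' ∈ I := by
    rw [Fin.forall_fin_two]
    constructor
    · obtain ⟨g₂, hg₂, hPhig₂⟩ := VS_mem.mp h2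
      have heq : X 0 * g' = g₂ := by
        apply Phi_inj_homog _ hg₂.2
        · rw [Phi_X0_mul, hg', Phi_Hg, hPhig₂]
        · have := (isHomogeneous_X K (0 : Fin 2)).mul hg'h
          rwa [add_comm] at this
      rw [heq]
      exact hg₂.1
    · obtain ⟨g₁, hg₁, hPhig₁⟩ := VS_mem.mp h1
      have heq : X 1 * g' = g₁ := by
        apply Phi_inj_homog _ hg₁.2
        · rw [Phi_X1_mul, hg', Phi_Hg, hPhig₁]
        · have := (isHomogeneous_X K (1 : Fin 2)).mul hg'h
          rwa [add_comm] at this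
      rw [heq]
      exact hg₁.1
  have hgI : g' ∈ I := hI g' hXg
  exact VS_mem.mpr ⟨g', ⟨hgI, hg'h⟩, Phi_Hg t p⟩

/-- Multiplication by `X` as a linear map on `K[z]`. -/
def mulXL (K : Type*) [Field K] : Polynomial K →ₗ[K] Polynomial K :=
  LinearMap.mulLeft K Polynomial.X

lemma mulXL_apply (p : Polynomial K) : mulXL K p = Polynomial.X * p := rfl

lemma mulLeft_injective {g : Polynomial K} (hg : g ≠ 0) :
    Function.Injective (LinearMap.mulLeft K g) := by
  intro p q h
  exact mul_left_cancel₀ hg h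

lemma finrank_map_mulLeft {g : Polynomial K} (hg : g ≠ 0) (M : Submodule K (Polynomial K)) :
    Module.finrank K (Submodule.map (LinearMap.mulLeft K g) M) = Module.finrank K M :=
  (Submodule.equivMapOfInjective _ (mulLeft_injective hg) M).symm.finrank_eq

lemma map_mulXL_degreeLT (m : ℕ) :
    Submodule.map (mulXL K) (Polynomial.degreeLT K m) ≤ Polynomial.degreeLT K (m+1) := by
  rintro q ⟨p, hp, rfl⟩
  rw [SetLike.mem_coe, Polynomial.mem_degreeLT] at hp
  rw [Polynomial.mem_degreeLT, mulXL_apply]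
  calc (Polynomial.X * p).degree ≤ 1 + p.degree := by
        rw [← Polynomial.degree_X (R := K)]
        exact Polynomial.degree_mul_le _ _
    _ < 1 + (m : WithBot ℕ) := by
        apply WithBot.add_lt_add_left (by simp) hp
    _ = ((m+1 : ℕ) : WithBot ℕ) := by
        push_cast
        ring

lemma mem_degreeLT_one {p : Polynomial K} :
    p ∈ Polynomial.degreeLT K 1 ↔ ∃ c : K, p = Polynomial.C c := by
  rw [Polynomial.mem_degreeLT]
  constructor
  · intro h
    have h0 : p.degree ≤ 0 := by
      exact_mod_cast Nat.WithBot.lt_one_iff_le_zero.mp (by exact_mod_cast h)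
    exact ⟨p.coeff 0, Polynomial.degree_le_zero_iff.mp h0⟩
  · rintro ⟨c, rfl⟩
    calc (Polynomial.C c).degree ≤ 0 := Polynomial.degree_C_le
      _ < ((1:ℕ) : WithBot ℕ) := by norm_num

lemma degreeLT_succ_eq (m : ℕ) (hm : 1 ≤ m) :
    Polynomial.degreeLT K (m+1)
      = Polynomial.degreeLT K m ⊔ Submodule.map (mulXL K) (Polynomial.degreeLT K m) := by
  apply le_antisymm
  · intro p hp
    rw [Polynomial.mem_degreeLT] at hp
    have hdecomp : p = Polynomial.X * p.divX + Polynomial.C (p.coeff 0) :=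
      (Polynomial.X_mul_divX_add p).symm
    have hC : Polynomial.C (p.coeff 0) ∈ Polynomial.degreeLT K m := by
      rw [Polynomial.mem_degreeLT]
      calc (Polynomial.C (p.coeff 0)).degree ≤ 0 := Polynomial.degree_C_le
        _ < (m : WithBot ℕ) := by exact_mod_cast (by exact_mod_cast hm : (0 : WithBot ℕ) < m)
    have hdivX : p.divX ∈ Polynomial.degreeLT K m := by
      rw [Polynomial.mem_degreeLT]
      by_cases hp0 : p = 0
      · rw [hp0]
        simp only [Polynomial.divX_zero, Polynomial.degree_zero]
        exact WithBot.bot_lt_coe m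
      · have h1 : p.divX.degree < p.degree := Polynomial.degree_divX_lt hp0
        have h2 : p.degree ≤ (m : WithBot ℕ) := by
          rcases Polynomial.degree_eq_natDegree hp0 ▸ hp with h
          rw [Polynomial.degree_eq_natDegree hp0]
          exact_mod_cast Nat.lt_succ_iff.mp (by exact_mod_cast h)
        exact lt_of_lt_of_le h1 h2
    rw [hdecomp]
    apply Submodule.add_mem
    · exact Submodule.mem_sup_right ⟨p.divX, hdivX, rfl⟩
    · exact Submodule.mem_sup_left hC
  · apply sup_le
    · exact Polynomial.degreeLT_mono (by omega)
    · exact le_trans (Submodule.map_mono (Polynomial.degreeLT_mono (by omega)))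
        (map_mulXL_degreeLT m)

lemma not_mulX_stable {n : ℕ} {W : Submodule K (Polynomial K)}
    (hle : W ≤ Polynomial.degreeLT K n) (hne : W ≠ ⊥)
    (hst : Submodule.map (mulXL K) W ≤ W) : False := by
  obtain ⟨p, hpW, hp0⟩ := (Submodule.ne_bot_iff W).mp hne
  have hpow : ∀ k : ℕ, Polynomial.X ^ k * p ∈ W := by
    intro k
    induction k with
    | zero => simpa using hpW
    | succ k ih =>
        have : Polynomial.X * (Polynomial.X ^ k * p) ∈ W := hst ⟨_, ih, rfl⟩
        rw [← mul_assoc, ← pow_succ'] at this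
        exact this
  have hmem := hle (hpow n)
  rw [Polynomial.mem_degreeLT] at hmem
  have hXnp : Polynomial.X ^ n * p ≠ 0 := mul_ne_zero (pow_ne_zero _ Polynomial.X_ne_zero) hp0
  have : (Polynomial.X ^ n * p).degree = n + p.degree := by
    rw [Polynomial.degree_mul, Polynomial.degree_pow, Polynomial.degree_X]
    norm_num
  rw [this] at hmem
  have hdp : (0 : WithBot ℕ) ≤ p.degree := Polynomial.zero_le_degree_iff.mpr hp0
  have : (n : WithBot ℕ) < n := lt_of_le_of_lt (by simpa [add_comm] using add_le_add_left hdp (n : WithBot ℕ)) hmem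
  exact lt_irrefl _ this

set_option synthInstance.maxHeartbeats 1000000 in
/-- Macaulay-type structure lemma: a nonzero finite-dimensional subspace `W ⊆ K[z]` with
`dim (W + zW) ≤ dim W + 1` is of the form `g · P_{< dim W}`. -/
lemma struct_lemma :
    ∀ m n : ℕ, ∀ W : Submodule K (Polynomial K), W ≤ Polynomial.degreeLT K n → W ≠ ⊥ →
      Module.finrank K W = m →
      Module.finrank K ↥(W ⊔ Submodule.map (mulXL K) W) ≤ m + 1 →
      ∃ g : Polynomial K, g ≠ 0 ∧
        W = Submodule.map (LinearMap.mulLeft K g) (Polynomial.degreeLT K m) := by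
  intro m
  induction m with
  | zero =>
      intro n W hle hne hrk _
      haveI : FiniteDimensional K W := Submodule.finiteDimensional_of_le hle
      exact absurd (Submodule.finrank_eq_zero.mp hrk) hne
  | succ m ih =>
      intro n W hle hne hrk hsup
      haveI : FiniteDimensional K W := Submodule.finiteDimensional_of_le hle
      rcases Nat.eq_zero_or_pos m with hm0 | hm1
      · -- base case : dim W = 1
        subst hm0
        obtain ⟨p, hpW, hp0⟩ := (Submodule.ne_bot_iff W).mp hne
        have hspan : Submodule.span K {p} = W := by
          apply Submodule.eq_of_le_of_finrank_le
            ((Submodule.span_singleton_le_iff_mem p W).mpr hpW)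
          rw [hrk, finrank_span_singleton hp0]
        refine ⟨p, hp0, ?_⟩
        rw [← hspan]
        ext q
        rw [Submodule.mem_span_singleton]
        constructor
        · rintro ⟨c, rfl⟩
          exact ⟨Polynomial.C c, mem_degreeLT_one.mpr ⟨c, rfl⟩, by
            rw [LinearMap.mulLeft_apply, mul_comm, ← Polynomial.smul_eq_C_mul]⟩
        · rintro ⟨r, hr, rfl⟩
          obtain ⟨c, rfl⟩ := mem_degreeLT_one.mp hr
          exact ⟨c, by rw [LinearMap.mulLeft_apply, mul_comm, ← Polynomial.smul_eq_C_mul]⟩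
      · -- inductive step : dim W = m + 1 ≥ 2
        set T : Submodule K (Polynomial K) := W ⊔ Submodule.map (mulXL K) W with hT
        have hTle : T ≤ Polynomial.degreeLT K (n+1) := by
          apply sup_le
          · exact le_trans hle (Polynomial.degreeLT_mono (by omega))
          · exact le_trans (Submodule.map_mono hle) (map_mulXL_degreeLT n)
        haveI : FiniteDimensional K T := Submodule.finiteDimensional_of_le hTle
        have hWT : W ≤ T := le_sup_left
        set W' : Submodule K T := Submodule.comap T.subtype W with hW'
        have hres : ∀ x ∈ W, mulXL K x ∈ T := fun x hx =>
          Submodule.mem_sup_right (Submodule.mem_map_of_mem hx)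
        set φ : W →ₗ[K] (T ⧸ W') := W'.mkQ.comp ((mulXL K).restrict hres) with hφ
        set U : Submodule K (Polynomial K) := W ⊓ Submodule.comap (mulXL K) W with hU
        have hker : LinearMap.ker φ = Submodule.comap W.subtype U := by
          ext x
          simp only [hφ, LinearMap.mem_ker, LinearMap.comp_apply, Submodule.mkQ_apply,
            Submodule.Quotient.mk_eq_zero, hW', Submodule.mem_comap, hU, Submodule.mem_inf]
          constructor
          · intro h
            exact ⟨x.2, h⟩
          · intro h
            exact h.2
        have hU_le : U ≤ W := inf_le_left
        haveI : FiniteDimensional K U := Submodule.finiteDimensional_of_le (le_trans hU_le hle)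
        have hrkker : Module.finrank K (LinearMap.ker φ) = Module.finrank K U := by
          rw [hker]
          exact (Submodule.comapSubtypeEquivOfLe hU_le).finrank_eq
        have hrkW' : Module.finrank K W' = Module.finrank K W :=
          (Submodule.comapSubtypeEquivOfLe hWT).finrank_eq
        have hquot : Module.finrank K (T ⧸ W') + Module.finrank K W' = Module.finrank K T :=
          Submodule.finrank_quotient_add_finrank W'
        have hrange : Module.finrank K (LinearMap.range φ) ≤ Module.finrank K (T ⧸ W') :=
          Submodule.finrank_le _
        have hrn : Module.finrank K (LinearMap.range φ) + Module.finrank K (LinearMap.ker φ)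
            = Module.finrank K W := LinearMap.finrank_range_add_finrank_ker φ
        have hUrk_ge : m ≤ Module.finrank K U := by omega
        have hUrk_le : Module.finrank K U ≤ m := by
          by_contra hcon
          have : Module.finrank K W ≤ Module.finrank K U := by omega
          have hUW : U = W := Submodule.eq_of_le_of_finrank_le hU_le this
          apply not_mulX_stable hle hne
          intro q hq
          obtain ⟨x, hx, rfl⟩ := hq
          have : x ∈ U := hUW ▸ hx
          exact (Submodule.mem_inf.mp this).2
        have hUrk : Module.finrank K U = m := le_antisymm hUrk_le hUrk_ge
        have hUne : U ≠ ⊥ := by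
          intro hbot
          rw [hbot, finrank_bot] at hUrk
          omega
        have hUsuple : U ⊔ Submodule.map (mulXL K) U ≤ W := by
          apply sup_le hU_le
          intro q hq
          obtain ⟨x, hx, rfl⟩ := hq
          exact (Submodule.mem_inf.mp hx).2
        have hUsup : Module.finrank K ↥(U ⊔ Submodule.map (mulXL K) U) ≤ m + 1 := by
          calc Module.finrank K ↥(U ⊔ Submodule.map (mulXL K) U)
              ≤ Module.finrank K W := Submodule.finrank_mono hUsuple
            _ = m + 1 := hrk
        obtain ⟨g, hg0, hgU⟩ := ih n U (le_trans hU_le hle) hUne hUrk hUsup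
        refine ⟨g, hg0, ?_⟩
        have hcomm : (LinearMap.mulLeft K g).comp (mulXL K)
            = (mulXL K).comp (LinearMap.mulLeft K g) := by
          apply LinearMap.ext
          intro p
          simp only [LinearMap.comp_apply, LinearMap.mulLeft_apply, mulXL_apply]
          ring
        have hkey : Submodule.map (LinearMap.mulLeft K g) (Polynomial.degreeLT K (m+1))
            = U ⊔ Submodule.map (mulXL K) U := by
          rw [degreeLT_succ_eq m hm1, Submodule.map_sup, ← Submodule.map_comp, hcomm,
            Submodule.map_comp, ← hgU]
        have hfr : Module.finrank K
            ↥(Submodule.map (LinearMap.mulLeft K g) (Polynomial.degreeLT K (m+1)))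
            = m + 1 := by
          rw [finrank_map_mulLeft hg0, (Polynomial.degreeLTEquiv K (m+1)).finrank_eq,
            Module.finrank_fin_fun]
        rw [hkey] at hfr
        have : U ⊔ Submodule.map (mulXL K) U = W := by
          apply Submodule.eq_of_le_of_finrank_le hUsuple
          omega
        rw [hkey, this]

lemma VS_finrank_of_hilb {I : Ideal (MvPolynomial (Fin 2) K)} {t D : ℕ}
    (h : hilb K I t = D) : Module.finrank K (VS K I t) = t + 1 - D := by
  have := hilb_add_finrank I t
  omega

/-- The main lower bound: any saturated ideal contained in `F^⊥` with eventually-constant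
Hilbert function `D` satisfies `D ≥ a+1`. -/
lemma lower_bound [CharZero K] (a b : ℕ) (hab : a ≤ b) (I : Ideal (MvPolynomial (Fin 2) K))
    (hSat : SatIdeal I)
    (hperp : (↑I : Set (MvPolynomial (Fin 2) K)) ⊆
      perp ((X 0 : MvPolynomial (Fin 2) K) ^ a * (X 1) ^ b))
    (D : ℕ) (hD : FiniteSchemeDeg K I D) : a + 1 ≤ D := by
  by_contra hcon
  have hDa : D ≤ a := by omega
  obtain ⟨N, hN⟩ := hD
  set T := max N D with hT
  have hTN : N ≤ T := le_max_left _ _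
  have hTD : D ≤ T := le_max_right _ _
  haveI : ∀ t : ℕ, FiniteDimensional K (VS K I t) := fun t =>
    Submodule.finiteDimensional_of_le (VS_le_degreeLT I t)
  have hfr : ∀ t, N ≤ t → Module.finrank K (VS K I t) = t + 1 - D := fun t ht =>
    VS_finrank_of_hilb (hN t ht)
  set W := VS K I T with hWdef
  have hWrk : Module.finrank K W = T + 1 - D := hfr T hTN
  have hWne : W ≠ ⊥ := by
    intro hbot
    rw [hWdef] at hbot
    rw [hWdef, hbot, finrank_bot] at hWrk
    omega
  have hsuple : W ⊔ Submodule.map (mulXL K) W ≤ VS K I (T+1) := by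
    apply sup_le
    · exact VS_mono I T
    · rintro q ⟨p, hp, rfl⟩
      exact VS_X_mul I T hp
  have hsup : Module.finrank K ↥(W ⊔ Submodule.map (mulXL K) W) ≤ (T + 1 - D) + 1 := by
    calc Module.finrank K ↥(W ⊔ Submodule.map (mulXL K) W)
        ≤ Module.finrank K (VS K I (T+1)) := Submodule.finrank_mono hsuple
      _ = (T + 1 - D) + 1 := by rw [hfr (T+1) (by omega)]; omega
  obtain ⟨g, hg0, hWeq⟩ := struct_lemma (T + 1 - D) (T + 1) W (VS_le_degreeLT I T) hWne hWrk hsup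
  -- the degree bound on g
  have hdg : g.natDegree ≤ D := by
    have hmem : g * Polynomial.X ^ (T - D) ∈ W := by
      rw [hWeq]
      refine ⟨Polynomial.X ^ (T - D), ?_, rfl⟩
      rw [SetLike.mem_coe, Polynomial.mem_degreeLT, Polynomial.degree_X_pow]
      exact_mod_cast (by omega : T - D < T + 1 - D)
    have hd := Polynomial.mem_degreeLT.mp (VS_le_degreeLT I T hmem)
    have hne : g * Polynomial.X ^ (T - D) ≠ 0 :=
      mul_ne_zero hg0 (pow_ne_zero _ Polynomial.X_ne_zero)
    have := (Polynomial.natDegree_lt_iff_degree_lt hne).mpr hd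
    rw [Polynomial.natDegree_mul hg0 (pow_ne_zero _ Polynomial.X_ne_zero),
      Polynomial.natDegree_X_pow] at this
    omega
  -- saturation descent
  have descent : ∀ k t : ℕ, t + k = T → D ≤ t →
      Submodule.map (LinearMap.mulLeft K g) (Polynomial.degreeLT K (t + 1 - D))
        ≤ VS K I t := by
    intro k
    induction k with
    | zero =>
        intro t ht _
        have : t = T := by omega
        rw [this, ← hWeq]
    | succ k ih =>
        intro t ht htD
        have prev := ih (t+1) (by omega) (by omega)
        rintro q ⟨u, hu, rfl⟩
        rw [SetLike.mem_coe, Polynomial.mem_degreeLT] at hu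
        by_cases hu0 : u = 0
        · rw [LinearMap.mulLeft_apply, hu0, mul_zero]
          exact (VS K I t).zero_mem
        have hund : u.natDegree < t + 1 - D := (Polynomial.natDegree_lt_iff_degree_lt hu0).mpr hu
        rw [LinearMap.mulLeft_apply]
        have hgu0 : g * u ≠ 0 := mul_ne_zero hg0 hu0
        apply VS_sat hSat
        · -- degree bound
          rw [← Polynomial.natDegree_lt_iff_degree_lt hgu0,
            Polynomial.natDegree_mul hg0 hu0]
          omega
        · -- g*u ∈ VS (t+1)
          apply prev
          refine ⟨u, ?_, rfl⟩
          rw [SetLike.mem_coe, Polynomial.mem_degreeLT]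
          exact lt_of_lt_of_le hu (by exact_mod_cast (by omega : t + 1 - D ≤ t + 1 + 1 - D))
        · -- X*(g*u) ∈ VS (t+1)
          have hXu : Polynomial.X * u ∈ Polynomial.degreeLT K (t + 1 + 1 - D) := by
            rw [Polynomial.mem_degreeLT, ← Polynomial.natDegree_lt_iff_degree_lt
              (mul_ne_zero Polynomial.X_ne_zero hu0),
              Polynomial.natDegree_mul Polynomial.X_ne_zero hu0, Polynomial.natDegree_X]
            omega
          have : g * (Polynomial.X * u) ∈ VS K I (t+1) := prev ⟨_, hXu, rfl⟩
          rw [show g * (Polynomial.X * u) = Polynomial.X * (g * u) by ring] at this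
          exact this
  have hgVS : g ∈ VS K I D := by
    have := descent (T - D) D (by omega) le_rfl
    apply this
    refine ⟨1, ?_, by rw [LinearMap.mulLeft_apply, mul_one]⟩
    rw [SetLike.mem_coe, Polynomial.mem_degreeLT]
    simp
  obtain ⟨h₀, hh₀, hPhi⟩ := VS_mem.mp hgVS
  have hne : h₀ ≠ 0 := by
    intro h
    rw [h, map_zero] at hPhi
    exact hg0 hPhi.symm
  have := hperp hh₀.1
  exact apolarAct_ne_zero a b D hDa (le_trans hDa hab) h₀ hh₀.2 hne this

section Membership

/-- (M1): every monomial of a multiple of `y₀^{a+1}` has `y₀`-exponent `≥ a+1`. -/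
lemma support_ge_of_mem_span {a : ℕ} {g : MvPolynomial (Fin 2) K}
    (hg : g ∈ Ideal.span {(X 0 : MvPolynomial (Fin 2) K) ^ (a+1)}) :
    ∀ s ∈ g.support, a + 1 ≤ s 0 := by
  classical
  obtain ⟨q, rfl⟩ := Ideal.mem_span_singleton.mp hg
  intro s hs
  have := MvPolynomial.support_mul ((X 0 : MvPolynomial (Fin 2) K) ^ (a+1)) q hs
  rw [X_pow_eq_monomial, support_monomial] at this
  rw [if_neg (one_ne_zero)] at this
  obtain ⟨u, hu, v, hv, rfl⟩ := Finset.mem_add.mp this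
  rw [Finset.mem_singleton] at hu
  subst hu
  rw [Finsupp.add_apply, Finsupp.single_eq_same]
  omega

/-- (M2): conversely, such a polynomial is a multiple of `y₀^{a+1}`. -/
lemma mem_span_of_support_ge {a : ℕ} {g : MvPolynomial (Fin 2) K}
    (h : ∀ s ∈ g.support, a + 1 ≤ s 0) :
    g ∈ Ideal.span {(X 0 : MvPolynomial (Fin 2) K) ^ (a+1)} := by
  classical
  rw [Ideal.mem_span_singleton]
  refine ⟨∑ s ∈ g.support, monomial (s - Finsupp.single 0 (a+1)) (coeff s g), ?_⟩
  rw [Finset.mul_sum]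
  conv_lhs => rw [← support_sum_monomial_coeff g]
  apply Finset.sum_congr rfl
  intro s hs
  rw [X_pow_eq_monomial, monomial_mul, one_mul]
  congr 1
  have hle : Finsupp.single 0 (a+1) ≤ s := by
    rw [Finsupp.le_def]
    intro i
    rcases Fin.exists_fin_two.mp ⟨i, rfl⟩ with h' | h' <;> rw [h']
    · rw [Finsupp.single_eq_same]
      exact h s hs
    · rw [Finsupp.single_apply, if_neg (by decide)]
      omega
  rw [add_tsub_cancel_of_le hle]

lemma homogIdeal_span (a : ℕ) :
    HomogIdeal (Ideal.span {(X 0 : MvPolynomial (Fin 2) K) ^ (a+1)}) := by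
  intro g hg t
  apply mem_span_of_support_ge
  intro s hs
  have hcs : coeff s g ≠ 0 := by
    have := mem_support_iff.mp hs
    rw [coeff_homogeneousComponent] at this
    by_contra h0
    rw [if_neg] at this
    · exact this rfl
    · intro hd
      apply this
      rw [if_pos hd, h0]
  exact support_ge_of_mem_span hg s (mem_support_iff.mpr hcs)

lemma satIdeal_span (a : ℕ) :
    SatIdeal (Ideal.span {(X 0 : MvPolynomial (Fin 2) K) ^ (a+1)}) := by
  intro g hX
  apply mem_span_of_support_ge
  intro s hs
  have h1 := hX 1
  have hc : coeff ((Finsupp.single 1 1) + s) (X 1 * g) = coeff s g :=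
    coeff_X_mul s 1 g
  have hmem : (Finsupp.single 1 1) + s ∈ (X 1 * g).support := by
    rw [mem_support_iff, hc]
    exact mem_support_iff.mp hs
  have := support_ge_of_mem_span h1 _ hmem
  rw [Finsupp.add_apply, Finsupp.single_apply, if_neg (by decide)] at this
  omega

lemma span_subset_perp (a b : ℕ) :
    (↑(Ideal.span {(X 0 : MvPolynomial (Fin 2) K) ^ (a + 1)})
        : Set (MvPolynomial (Fin 2) K)) ⊆
      perp ((X 0 : MvPolynomial (Fin 2) K) ^ a * (X 1 : MvPolynomial (Fin 2) K) ^ b) := by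
  intro g hg
  exact apolarAct_eq_zero_of_support a b g (support_ge_of_mem_span hg)

/-- Homogenization commutes with multiplying by powers of the variable. -/
lemma Hg_X_pow_mul (a t : ℕ) (u : Polynomial K) :
    Hg K t (Polynomial.X ^ (a+1) * u) = (X 0 : MvPolynomial (Fin 2) K) ^ (a+1)
      * Hg K (t - (a+1)) u := by
  induction u using Polynomial.induction_on' with
  | add p q hp hq => rw [mul_add, Hg_add, hp, hq, Hg_add, mul_add]
  | monomial j c =>
      have harith : t - (a + 1 + j) = t - (a+1) - j := by omega
      rw [Polynomial.X_pow_eq_monomial, Polynomial.monomial_mul_monomial, one_mul,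
        Hg_monomial, Hg_monomial, X_pow_eq_monomial, monomial_mul, one_mul,
        ← add_assoc, ← Finsupp.single_add, harith]

lemma VS_span_eq (a t : ℕ) (hta : a + 1 ≤ t) :
    VS K (Ideal.span {(X 0 : MvPolynomial (Fin 2) K) ^ (a+1)}) t
      = Submodule.map (LinearMap.mulLeft K (Polynomial.X ^ (a+1)))
          (Polynomial.degreeLT K (t - a)) := by
  apply le_antisymm
  · intro p hp
    obtain ⟨g, hg, rfl⟩ := VS_mem.mp hp
    obtain ⟨q, rfl⟩ := Ideal.mem_span_singleton.mp hg.1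
    have hPhi : Phi K ((X 0 : MvPolynomial (Fin 2) K) ^ (a+1) * q)
        = Polynomial.X ^ (a+1) * Phi K q := by
      rw [map_mul, map_pow, Phi_X0]
    by_cases hq0 : Phi K q = 0
    · rw [hPhi, hq0, mul_zero]
      exact Submodule.zero_mem _
    refine ⟨Phi K q, ?_, by rw [LinearMap.mulLeft_apply, hPhi]⟩
    have hne : Polynomial.X ^ (a+1) * Phi K q ≠ 0 :=
      mul_ne_zero (pow_ne_zero _ Polynomial.X_ne_zero) hq0
    have hdeg := Phi_degree_lt hg.2
    rw [Polynomial.mem_degreeLT, hPhi, ← Polynomial.natDegree_lt_iff_degree_lt hne,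
      Polynomial.natDegree_mul (pow_ne_zero _ Polynomial.X_ne_zero) hq0,
      Polynomial.natDegree_X_pow] at hdeg
    rw [SetLike.mem_coe, Polynomial.mem_degreeLT,
      ← Polynomial.natDegree_lt_iff_degree_lt hq0]
    omega
  · rintro p ⟨u, hu, rfl⟩
    rw [SetLike.mem_coe, Polynomial.mem_degreeLT] at hu
    rw [LinearMap.mulLeft_apply]
    by_cases hu0 : u = 0
    · rw [hu0, mul_zero]
      exact Submodule.zero_mem _
    have hund : u.natDegree < t - a := (Polynomial.natDegree_lt_iff_degree_lt hu0).mpr hu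
    have hpd : (Polynomial.X ^ (a+1) * u).degree < ((t+1 : ℕ) : WithBot ℕ) := by
      rw [← Polynomial.natDegree_lt_iff_degree_lt
        (mul_ne_zero (pow_ne_zero _ Polynomial.X_ne_zero) hu0),
        Polynomial.natDegree_mul (pow_ne_zero _ Polynomial.X_ne_zero) hu0,
        Polynomial.natDegree_X_pow]
      omega
    refine VS_mem.mpr ⟨Hg K t (Polynomial.X ^ (a+1) * u), ⟨?_, Hg_isHomog hpd⟩,
      Phi_Hg t _⟩
    rw [Hg_X_pow_mul]
    rw [Ideal.mem_span_singleton]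
    exact Dvd.intro _ rfl

lemma hilb_span (a t : ℕ) (hta : a + 1 ≤ t) :
    hilb K (Ideal.span {(X 0 : MvPolynomial (Fin 2) K) ^ (a+1)}) t = a + 1 := by
  have h1 := hilb_add_finrank (Ideal.span {(X 0 : MvPolynomial (Fin 2) K) ^ (a+1)}) t
  rw [VS_span_eq a t hta] at h1
  rw [finrank_map_mulLeft (pow_ne_zero _ Polynomial.X_ne_zero),
    (Polynomial.degreeLTEquiv K (t-a)).finrank_eq, Module.finrank_fin_fun] at h1
  omega

lemma finiteSchemeDeg_span (a : ℕ) :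
    FiniteSchemeDeg K (Ideal.span {(X 0 : MvPolynomial (Fin 2) K) ^ (a + 1)}) (a + 1) :=
  ⟨a + 1, fun t ht => hilb_span a t ht⟩

end Membership

theorem cactusRank_binary_monomial' {K : Type*} [Field K] [IsAlgClosed K] [CharZero K]
    (a b : ℕ) (hab : a ≤ b) :
    cactusRank ((X 0 : MvPolynomial (Fin 2) K) ^ a * (X 1 : MvPolynomial (Fin 2) K) ^ b)
      = a + 1 ∧
    (↑(Ideal.span {(X 0 : MvPolynomial (Fin 2) K) ^ (a + 1)})
        : Set (MvPolynomial (Fin 2) K)) ⊆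
      perp ((X 0 : MvPolynomial (Fin 2) K) ^ a * (X 1 : MvPolynomial (Fin 2) K) ^ b) ∧
    FiniteSchemeDeg K (Ideal.span {(X 0 : MvPolynomial (Fin 2) K) ^ (a + 1)})
      (a + 1) := by
  have hmem : (a + 1) ∈ {D | ∃ I : Ideal (MvPolynomial (Fin 2) K), HomogIdeal I ∧ SatIdeal I ∧
      (↑I : Set (MvPolynomial (Fin 2) K)) ⊆
        perp ((X 0 : MvPolynomial (Fin 2) K) ^ a * (X 1 : MvPolynomial (Fin 2) K) ^ b) ∧
      FiniteSchemeDeg K I D} :=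
    ⟨Ideal.span {(X 0 : MvPolynomial (Fin 2) K) ^ (a + 1)}, homogIdeal_span a,
      satIdeal_span a, span_subset_perp a b, finiteSchemeDeg_span a⟩
  refine ⟨?_, span_subset_perp a b, finiteSchemeDeg_span a⟩
  unfold cactusRank
  apply le_antisymm
  · exact Nat.sInf_le hmem
  · apply le_csInf ⟨a + 1, hmem⟩
    rintro D ⟨I, _, hS, hP, hF⟩
    exact lower_bound a b hab I hS hP D hF

end CactusAux

/-- For the binary monomial `F = x₀^a x₁^b` with `a ≤ b` over an
algebraically closed field of characteristic zero, `cr(F) = a + 1`, realized by the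
length-`(a+1)` scheme `V(y₀^{a+1}) ⊆ P¹`. -/
theorem cactusRank_binary_monomial {K : Type*} [Field K] [IsAlgClosed K] [CharZero K]
    (a b : ℕ) (hab : a ≤ b) :
    cactusRank ((X 0 : MvPolynomial (Fin 2) K) ^ a * (X 1 : MvPolynomial (Fin 2) K) ^ b)
      = a + 1 ∧
    (↑(Ideal.span {(X 0 : MvPolynomial (Fin 2) K) ^ (a + 1)})
        : Set (MvPolynomial (Fin 2) K)) ⊆
      perp ((X 0 : MvPolynomial (Fin 2) K) ^ a * (X 1 : MvPolynomial (Fin 2) K) ^ b) ∧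
    FiniteSchemeDeg K (Ideal.span {(X 0 : MvPolynomial (Fin 2) K) ^ (a + 1)})
      (a + 1) := by
  exact cactusRank_binary_monomial' a b hab
end
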